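/- arXiv:1602.01033 — 7 statements merged into one kernel-verified Lean document; each statement's English description precedes it below -/
import Mathlib

section
/- If G is a 2-connected graph of order n such that d(u) + d(v) ≥ n+1 for every pair of distinct nonadjacent vertices u and v, then G is Hamiltonian-connected, i.e., any two vertices of G are joined by a Hamiltonian path. -/
open SimpleGraph Finset

/-!
Ore's closure argument. Adding an edge `ab` between nonadjacent vertices keeps the degree
condition, so by induction on the graph (more edges first; the complete graph is the base case)
`G ⊔ ab` has a Hamiltonian `u`-`v` path `x₀ … xₙ₋₁`, which we may assume uses `ab = xₜxₜ₊₁`.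
Among the `n - 2` indices `j ≠ t` with `j + 1 < n`, at least `d(a) - 1` have `a ~ xⱼ` and at
least `d(b) - 1` have `b ~ xⱼ₊₁`; since `d(a) + d(b) ≥ n + 1`, some `j` has both. Reversing the
segment `xⱼ₊₁ … xₜ` (or `xₜ₊₁ … xⱼ`) trades the edges `xⱼxⱼ₊₁` and `ab` for `axⱼ` and `bxⱼ₊₁`,
which gives a Hamiltonian `u`-`v` path of `G`.
-/

/-- Spectral radius (largest adjacency eigenvalue) of a graph on `Fin n`. -/
noncomputable def specRad {n : ℕ} (G : SimpleGraph (Fin n)) : ℝ :=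
  haveI := Classical.decRel G.Adj
  ⨆ i, (Matrix.IsHermitian.eigenvalues
    (by
      rw [Matrix.IsHermitian, Matrix.conjTranspose_eq_transpose_of_trivial]
      exact G.isSymm_adjMatrix : (G.adjMatrix ℝ).IsHermitian)) i

/-- `M_k(n) = K_k ∨ (K_{n-2k} + K̄_k)`: vertices `0..k-1` are the independent set,
vertices `k..2k-1` their joint neighborhood, vertices `k..n-1` a clique. -/
def Mgraph (k n : ℕ) : SimpleGraph (Fin n) where
  Adj i j := i ≠ j ∧ ((k ≤ i.val ∧ k ≤ j.val) ∨
    (i.val < k ∧ k ≤ j.val ∧ j.val < 2 * k) ∨ (j.val < k ∧ k ≤ i.val ∧ i.val < 2 * k))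
  symm := by constructor; intro i j h; exact ⟨h.1.symm, by tauto⟩
  loopless := by constructor; intro i h; exact h.1 rfl

instance (k n : ℕ) : DecidableRel (Mgraph k n).Adj := fun _ _ => instDecidableAnd

/-- `L_k(n) = K_1 ∨ (K_{n-k-1} + K_k)`: a `K_{k+1}` on vertices `0..k` and a
`K_{n-k}` on vertices `k..n-1`, sharing the vertex `k`. -/
def Lgraph (k n : ℕ) : SimpleGraph (Fin n) where
  Adj i j := i ≠ j ∧ ((i.val ≤ k ∧ j.val ≤ k) ∨ (k ≤ i.val ∧ k ≤ j.val))
  symm := by constructor; intro i j h; exact ⟨h.1.symm, by tauto⟩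
  loopless := by constructor; intro i h; exact h.1 rfl

instance (k n : ℕ) : DecidableRel (Lgraph k n).Adj := fun _ _ => instDecidableAnd

/-- `N_k(n) = K_k ∨ (K_{n-2k-1} + K̄_{k+1})`: vertices `0..k` are the independent set,
vertices `k+1..2k` their joint neighborhood, vertices `k+1..n-1` a clique. -/
def Ngraph (k n : ℕ) : SimpleGraph (Fin n) where
  Adj i j := i ≠ j ∧ ((k + 1 ≤ i.val ∧ k + 1 ≤ j.val) ∨
    (i.val < k + 1 ∧ k + 1 ≤ j.val ∧ j.val < 2 * k + 1) ∨
    (j.val < k + 1 ∧ k + 1 ≤ i.val ∧ i.val < 2 * k + 1))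
  symm := by constructor; intro i j h; exact ⟨h.1.symm, by tauto⟩
  loopless := by constructor; intro i h; exact h.1 rfl

instance (k n : ℕ) : DecidableRel (Ngraph k n).Adj := fun _ _ => instDecidableAnd

/-- The disjoint union `K_a + K_{n-a}` on `Fin n`: vertices `0..a-1` form one clique,
vertices `a..n-1` the other. -/
def DUgraph (a n : ℕ) : SimpleGraph (Fin n) where
  Adj i j := i ≠ j ∧ ((i.val < a ∧ j.val < a) ∨ (a ≤ i.val ∧ a ≤ j.val))
  symm := by constructor; intro i j h; exact ⟨h.1.symm, by tauto⟩
  loopless := by constructor; intro i h; exact h.1 rfl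

instance (a n : ℕ) : DecidableRel (DUgraph a n).Adj := fun _ _ => instDecidableAnd

/-- `G` has a Hamiltonian path. -/
def HasHamiltonianPath {V : Type*} [DecidableEq V] (G : SimpleGraph V) : Prop :=
  ∃ (u v : V) (p : G.Walk u v), p.IsHamiltonian

/-- `G` is Hamiltonian-connected. -/
def HamiltonianConnected {V : Type*} [DecidableEq V] (G : SimpleGraph V) : Prop :=
  ∀ u v : V, u ≠ v → ∃ p : G.Walk u v, p.IsHamiltonian

namespace List

variable {α : Type*} {R : α → α → Prop}

theorem IsChain.append_reverse_append [Std.Symm R] {A B C : List α} (hB : B ≠ [])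
    (hA : A.IsChain R) (hB' : B.IsChain R) (hC : C.IsChain R)
    (hAB : ∀ x ∈ A.getLast?, ∀ y ∈ B.getLast?, R x y)
    (hBC : ∀ x ∈ B.head?, ∀ y ∈ C.head?, R x y) :
    (A ++ B.reverse ++ C).IsChain R := by
  refine (hA.append (isChain_reverse.2 (hB'.imp fun _ _ h => Std.Symm.symm _ _ h)) ?_).append hC ?_
  · simpa using hAB
  · simpa [getLast?_append, hB] using hBC

/-- Reverses the entries of `l` at the positions `p` with `i ≤ p < j`. -/
def reverseSlice (i j : ℕ) (l : List α) : List α :=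
  l.take i ++ ((l.take j).drop i).reverse ++ l.drop j

theorem reverseSlice_perm {i j : ℕ} (hij : i ≤ j) (l : List α) : (l.reverseSlice i j).Perm l :=
  calc l.reverseSlice i j
      _ ~ l.take i ++ (l.take j).drop i ++ l.drop j :=
        ((reverse_perm _).append_left _).append_right _
      _ = l := by
        rw [show l.take i = (l.take j).take i by rw [take_take, min_eq_left hij],
          take_append_drop, take_append_drop]

theorem head?_reverseSlice {i : ℕ} (hi : 0 < i) (j : ℕ) (l : List α) :
    (l.reverseSlice i j).head? = l.head? := by
  obtain ⟨i, rfl⟩ := Nat.exists_eq_add_one_of_ne_zero hi.ne'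
  cases l <;> simp [reverseSlice]

theorem getLast?_reverseSlice (i : ℕ) {j : ℕ} {l : List α} (hj : j < l.length) :
    (l.reverseSlice i j).getLast? = l.getLast? := by
  simp [reverseSlice, getLast?_append, getLast?_drop, Nat.not_le_of_lt hj,
    getLast?_eq_some_getLast (ne_nil_of_length_pos (Nat.zero_lt_of_lt hj))]

theorem isChain_reverseSlice [Std.Symm R] {l : List α} {i k : ℕ} (hik : i < k)
    (hk : k + 1 < l.length) (hR : ∀ j (hj : j + 1 < l.length), j ≠ i → j ≠ k → R l[j] l[j + 1])
    (h₁ : R l[i] l[k]) (h₂ : R l[i + 1] l[k + 1]) :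
    (l.reverseSlice (i + 1) (k + 1)).IsChain R := by
  apply IsChain.append_reverse_append
  · simp
    omega
  iterate 3
    rw [isChain_iff_getElem]
    intro j hj
    simp only [length_take, length_drop, getElem_take, getElem_drop] at hj ⊢
    exact hR _ (by omega) (by omega) (by omega)
  · intro x hx y hy
    have e₀ : min (i + 1) l.length = i + 1 := by omega
    have e₁ : min (k + 1) l.length = k + 1 := by omega
    have e₂ : i + 1 + (k - i - 1) = k := by omega
    simp [getLast?_eq_getElem?, e₀, e₁, hik] at hx hy
    simp only [e₂] at hy
    exact hx ▸ hy ▸ h₁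
  · intro x hx y hy
    simp [hik, hk, getElem?_eq_getElem (show i + 1 < l.length by omega)] at hx hy
    exact hx ▸ hy ▸ h₂

theorem Nodup.eq_of_sym2_getElem_eq {l : List α} (hnd : l.Nodup) {i j : ℕ} (hi : i + 1 < l.length)
    (hj : j + 1 < l.length) (h : s(l[i], l[i + 1]) = s(l[j], l[j + 1])) : i = j := by
  rcases Sym2.eq_iff.1 h with ⟨h₁, -⟩ | ⟨h₁, h₂⟩
  · exact hnd.getElem_inj_iff.1 h₁
  · have := hnd.getElem_inj_iff.1 h₁
    have := hnd.getElem_inj_iff.1 h₂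
    omega

end List

theorem List.Nodup.card_filter_range_getD {α : Type*} [Fintype α] {l : List α} (hnd : l.Nodup)
    (hmem : ∀ x, x ∈ l) (p : α → Prop) [DecidablePred p] (d : α) :
    #{j ∈ Finset.range l.length | p (l.getD j d)} = #{x | p x} := by
  refine card_nbij (fun j => l.getD j d) (fun j hj => ?_) (fun i hi j hj hij => ?_) (fun x hx => ?_)
  · simp only [Finset.coe_filter, Finset.mem_range, Finset.mem_univ, true_and,
      Set.mem_ofPred_eq] at hj ⊢
    exact hj.2
  · simp only [Finset.coe_filter, Finset.mem_range, Set.mem_ofPred_eq] at hi hj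
    simp only [getD_eq_getElem _ _ hi.1, getD_eq_getElem _ _ hj.1, hnd.getElem_inj_iff] at hij
    exact hij
  · obtain ⟨j, hj, rfl⟩ := getElem_of_mem (hmem x)
    refine ⟨j, ?_, getD_eq_getElem _ _ hj⟩
    simp only [Finset.coe_filter, Finset.mem_univ, true_and, Set.mem_ofPred_eq,
      Finset.mem_range] at hx ⊢
    rw [getD_eq_getElem _ _ hj]
    exact ⟨hj, hx⟩

namespace SimpleGraph

variable {V : Type*} {G : SimpleGraph V}

theorem exists_crossing_of_card_lt_degree_add_degree [Fintype V] [DecidableRel G.Adj]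
    {l : List V} (hnd : l.Nodup) (hmem : ∀ x, x ∈ l) {t : ℕ} (ht : t + 1 < l.length)
    (hdeg : Fintype.card V < G.degree l[t] + G.degree l[t + 1]) :
    ∃ j, ∃ hj : j + 1 < l.length, j ≠ t ∧ G.Adj l[t] l[j] ∧ G.Adj l[t + 1] l[j + 1] := by
  set a := l[t]
  set b := l[t + 1]
  obtain ⟨m, hm⟩ : ∃ m, l.length = m + 1 := ⟨l.length - 1, by omega⟩
  have hcard : Fintype.card V = m + 1 := by
    simpa [hm] using (hnd.card_filter_range_getD hmem (fun _ => True) a).symm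
  have hdeg_eq (x : V) : G.degree x = #{j ∈ range (m + 1) | G.Adj x (l.getD j x)} := by
    rw [← hm, hnd.card_filter_range_getD hmem, ← neighborFinset_eq_filter,
      card_neighborFinset_eq_degree]
  set S := {j ∈ range m | G.Adj a (l.getD j a)}
  set T := {j ∈ range m | G.Adj b (l.getD (j + 1) b)}
  have hS : G.degree a ≤ #S + 1 := by
    rw [hdeg_eq, card_filter, card_filter, sum_range_succ]
    gcongr
    split_ifs <;> simp
  have hT : G.degree b ≤ #T + 1 := by
    rw [hdeg_eq, card_filter, card_filter, sum_range_succ']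
    gcongr
    split_ifs <;> simp
  have hSt : S ⊆ (range m).erase t := by
    intro j hj
    simp only [S, mem_filter, mem_erase, mem_range] at hj ⊢
    refine ⟨?_, hj.1⟩
    rintro rfl
    rw [List.getD_eq_getElem _ _ (by omega)] at hj
    exact G.irrefl hj.2
  have hTt : T ⊆ (range m).erase t := by
    intro j hj
    simp only [T, mem_filter, mem_erase, mem_range] at hj ⊢
    refine ⟨?_, hj.1⟩
    rintro rfl
    rw [List.getD_eq_getElem _ _ ht] at hj
    exact G.irrefl hj.2
  obtain ⟨j, hj⟩ := inter_nonempty_of_card_lt_card_add_card hSt hTt (by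
    rw [card_erase_of_mem (mem_range.2 (by omega)), card_range]
    omega)
  have hjt := hSt (mem_inter.1 hj).1
  simp only [S, T, mem_inter, mem_filter, mem_range, mem_erase] at hj hjt
  rw [List.getD_eq_getElem _ _ (by omega), List.getD_eq_getElem _ _ (by omega)] at hj
  exact ⟨j, by omega, hjt.1, hj.1.2, hj.2.2⟩

theorem exists_isHamiltonian_of_isChain [DecidableEq V] {u v : V} {l : List V} (hnd : l.Nodup)
    (hmem : ∀ x, x ∈ l) (hchain : l.IsChain G.Adj) (hu : l.head? = some u)
    (hv : l.getLast? = some v) : ∃ p : G.Walk u v, p.IsHamiltonian := by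
  have hne : l ≠ [] := by
    rintro rfl
    simp at hu
  refine ⟨(Walk.ofSupport l hne hchain).copy ?_ ?_, ?_⟩
  · simpa [List.head?_eq_some_head hne] using hu
  · simpa [List.getLast?_eq_some_getLast hne] using hv
  · exact Walk.IsPath.isHamiltonian_of_mem (by simpa [Walk.isPath_def] using hnd)
      (by simpa using hmem)

theorem exists_isHamiltonian_of_crossing [DecidableEq V] {u v : V} {l : List V} (hnd : l.Nodup)
    (hmem : ∀ x, x ∈ l) (hu : l.head? = some u) (hv : l.getLast? = some v) {i k : ℕ}
    (hik : i < k) (hk : k + 1 < l.length)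
    (hR : ∀ j (hj : j + 1 < l.length), j ≠ i → j ≠ k → G.Adj l[j] l[j + 1])
    (h₁ : G.Adj l[i] l[k]) (h₂ : G.Adj l[i + 1] l[k + 1]) :
    ∃ p : G.Walk u v, p.IsHamiltonian := by
  have := G.symm
  have hperm := l.reverseSlice_perm (Nat.succ_le_succ hik.le)
  exact exists_isHamiltonian_of_isChain (hperm.nodup_iff.2 hnd) (fun x => hperm.mem_iff.2 (hmem x))
    (List.isChain_reverseSlice hik hk hR h₁ h₂)
    ((l.head?_reverseSlice (Nat.succ_pos i) _).trans hu) ((l.getLast?_reverseSlice _ hk).trans hv)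

theorem exists_isHamiltonian_top [Fintype V] [DecidableEq V] {u v : V} (huv : u ≠ v) :
    ∃ p : (⊤ : SimpleGraph V).Walk u v, p.IsHamiltonian := by
  set s := ((univ : Finset V).erase u).erase v
  have hnd : (u :: s.toList ++ [v]).Nodup := by
    simp [List.nodup_append, s, huv, eq_comm, Finset.nodup_toList]
    exact fun _ h _ => h
  refine exists_isHamiltonian_of_isChain hnd (fun x => ?_) ?_ (by simp)
    (by simp [List.getLast?_cons, List.getLast?_append])
  · by_cases hxu : x = u
    · simp [hxu]
    by_cases hxv : x = v
    · simp [hxv]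
    · simp [s, hxu, hxv]
  · exact (List.Pairwise.isChain hnd).imp fun _ _ h => (top_adj _ _).2 h

theorem Walk.IsHamiltonian.exists_of_sup_edge [Fintype V] [DecidableEq V] [DecidableRel G.Adj]
    {a b u v : V} (hdeg : Fintype.card V < G.degree a + G.degree b)
    {p : (G ⊔ edge a b).Walk u v} (hp : p.IsHamiltonian) : ∃ q : G.Walk u v, q.IsHamiltonian := by
  set l := p.support
  have hnd : l.Nodup := hp.isPath.support_nodup
  have hu : l.head? = some u := by
    rw [List.head?_eq_some_head p.support_ne_nil, p.head_support]
  have hv : l.getLast? = some v := by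
    rw [List.getLast?_eq_some_getLast p.support_ne_nil, p.getLast_support]
  by_cases hG : l.IsChain G.Adj
  · exact exists_isHamiltonian_of_isChain hnd hp.mem_support hG hu hv
  have hedge : ∀ j (hj : j + 1 < l.length), ¬ G.Adj l[j] l[j + 1] → s(a, b) = s(l[j], l[j + 1]) :=
    fun j hj hjG => by
      have hadj := (sup_adj _ _ _ _).1 (p.isChain_adj_support.getElem j hj)
      exact ((adj_edge _ _).1 (hadj.resolve_left hjG)).1
  obtain ⟨t, ht, hbad⟩ := List.exists_not_getElem_of_not_isChain hG
  have hgood : ∀ j (hj : j + 1 < l.length), j ≠ t → G.Adj l[j] l[j + 1] := fun j hj hjt => by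
    by_contra hjG
    exact hjt (hnd.eq_of_sym2_getElem_eq hj ht ((hedge j hj hjG).symm.trans (hedge t ht hbad)))
  have hdeg' : Fintype.card V < G.degree l[t] + G.degree l[t + 1] := by
    rcases Sym2.eq_iff.1 (hedge t ht hbad) with ⟨h₁, h₂⟩ | ⟨h₁, h₂⟩ <;> rw [← h₁, ← h₂] <;> omega
  obtain ⟨j, hj, hjt, h₁, h₂⟩ :=
    exists_crossing_of_card_lt_degree_add_degree hnd hp.mem_support ht hdeg'
  rcases lt_or_gt_of_ne hjt with hlt | hgt
  · exact exists_isHamiltonian_of_crossing hnd hp.mem_support hu hv hlt ht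
      (fun i hi _ hit => hgood i hi hit) h₁.symm h₂.symm
  · exact exists_isHamiltonian_of_crossing hnd hp.mem_support hu hv hgt hj
      (fun i hi hit _ => hgood i hi hit) h₁ h₂

theorem exists_isHamiltonian_of_card_lt_degree_add_degree [Fintype V] [DecidableEq V]
    (G : SimpleGraph V) [DecidableRel G.Adj]
    (hG : ∀ x y, x ≠ y → ¬ G.Adj x y → Fintype.card V < G.degree x + G.degree y)
    {u v : V} (huv : u ≠ v) : ∃ p : G.Walk u v, p.IsHamiltonian := by
  suffices ∀ (H : SimpleGraph V) [DecidableRel H.Adj],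
      (∀ x y, x ≠ y → ¬ H.Adj x y → Fintype.card V < H.degree x + H.degree y) →
        ∃ p : H.Walk u v, p.IsHamiltonian from this G hG
  intro H
  induction H using WellFoundedGT.induction with
  | ind H ih =>
    intro _ hH
    by_cases htop : H = ⊤
    · subst htop
      exact exists_isHamiltonian_top huv
    obtain ⟨a, b, hab, hnadj⟩ : ∃ a b, a ≠ b ∧ ¬ H.Adj a b := by
      by_contra! h
      exact htop (eq_top_iff.2 fun x y hxy => h x y ((top_adj x y).1 hxy))
    classical
    obtain ⟨p, hp⟩ := ih (H ⊔ edge a b) (lt_sup_edge _ _ _ hab hnadj) fun x y hxy hn => by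
      have := hH x y hxy fun h => hn (Or.inl h)
      have := degree_le_of_le (v := x) (le_sup_left : H ≤ H ⊔ edge a b)
      have := degree_le_of_le (v := y) (le_sup_left : H ≤ H ⊔ edge a b)
      omega
    exact hp.exists_of_sup_edge (hH a b hab hnadj)

end SimpleGraph

theorem stmt_3_general (n : ℕ) (G : SimpleGraph (Fin n)) [DecidableRel G.Adj]
    (h : ∀ u v : Fin n, u ≠ v → ¬ G.Adj u v → n + 1 ≤ G.degree u + G.degree v) :
    HamiltonianConnected G := fun _ _ huv =>
  exists_isHamiltonian_of_card_lt_degree_add_degree G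
    (fun x y hxy hn => by simpa using h x y hxy hn) huv

/-- Ore's theorem for Hamiltonian-connectedness: if `G` is `2`-connected and
`d(u) + d(v) ≥ n + 1` for all distinct nonadjacent `u, v`, then `G` is
Hamiltonian-connected. -/
theorem stmt_3 (n : ℕ) (hn : 3 ≤ n) (G : SimpleGraph (Fin n)) [DecidableRel G.Adj]
    (hconn : G.Connected)
    (h2conn : ∀ v : Fin n, (G.induce ({v}ᶜ : Set (Fin n))).Connected)
    (h : ∀ u v : Fin n, u ≠ v → ¬ G.Adj u v → n + 1 ≤ G.degree u + G.degree v) :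
    HamiltonianConnected G :=
  stmt_3_general n G h
end

section
/- Let G be a graph of order n with degree sequence d_1 ≤ d_2 ≤ ... ≤ d_n. If G has no Hamiltonian cycle, then there exists an integer s with 1 ≤ s < n/2 such that d_s ≤ s and d_{n-s} ≤ n-s-1. -/
open SimpleGraph Finset

/-!
Replace `G` by a maximal non-Hamiltonian supergraph `H`: degrees only grow, so the counts
`#{w | deg w ≤ c}` only shrink and it suffices to treat `H`. Choose non-adjacent `u, v` with
`deg u ≤ deg v` and `deg u + deg v` maximal. Adding the edge `uv` creates a Hamiltonian cycle, so
`H` has a Hamiltonian path `u = p 0, …, p (n-1) = v`. If `u ~ p (i+1)` and `p i ~ v`, the path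
closes up to a Hamiltonian cycle; hence `i ↦ i + 1` maps the neighbours of `v` on the path to
non-neighbours of `u`, and `deg u + deg v ≤ n - 1`. Now `s = deg u` works: the `s` predecessors of
the neighbours of `u` are not adjacent to `v`, so by maximality of the pair they have degree
`≤ s`; and `u` together with its `n - 1 - s` non-neighbours has degree `≤ n - 1 - s`.
-/

namespace SimpleGraph

variable {V : Type*} {G : SimpleGraph V} {n : ℕ}

-- Paths and cycles on `n` vertices are `ℕ`-indexed sequences, read only below `n`, so that
-- rerouting them is index arithmetic.
structure IsPathSeq (G : SimpleGraph V) (n : ℕ) (p : ℕ → V) : Prop where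
  injOn : Set.InjOn p (Set.Iio n)
  adj : ∀ k, k + 1 < n → G.Adj (p k) (p (k + 1))

structure IsCycleSeq (G : SimpleGraph V) (n : ℕ) (c : ℕ → V) : Prop
    extends G.IsPathSeq n c where
  adj_last_zero : G.Adj (c (n - 1)) (c 0)

lemma IsCycleSeq.cycleGraph_isContained {c : ℕ → V} (hc : G.IsCycleSeq n c) :
    cycleGraph n ⊑ G := by
  have key : ∀ i j : Fin n, (i - j : Fin n).val = 1 → G.Adj (c j) (c i) := by
    intro i j h
    rcases le_or_gt j i with hji | hij
    · rw [Fin.coe_sub_iff_le.2 hji] at h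
      rw [show (i : ℕ) = j + 1 by omega]
      exact hc.adj j (by omega)
    · rw [Fin.coe_sub_iff_lt.2 hij] at h
      rw [show (i : ℕ) = 0 by omega, show (j : ℕ) = n - 1 by omega]
      exact hc.adj_last_zero
  refine isContained_iff_exists_le_comap.2
    ⟨⟨fun i => c i, fun i j h => Fin.ext (hc.injOn i.2 j.2 h)⟩, fun i j hij => ?_⟩
  rcases cycleGraph_adj'.1 hij with h | h
  · exact (key i j h).symm
  · exact key j i h

lemma IsCycleSeq.reflect {c : ℕ → V} (hc : G.IsCycleSeq n c) :
    G.IsCycleSeq n (fun k => if k = 0 then c 0 else c (n - k)) := by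
  have hn : 2 ≤ n := by
    by_contra! h
    exact G.loopless.irrefl _ (show n - 1 = 0 by omega ▸ hc.adj_last_zero)
  refine ⟨⟨fun i hi j hj h => ?_, fun k hk => ?_⟩, ?_⟩
  · simp only [Set.mem_Iio] at hi hj
    split_ifs at h <;> have := hc.injOn (by simp; omega) (by simp; omega) h <;> omega
  · rcases Nat.eq_zero_or_pos k with rfl | hk0
    · simpa using hc.adj_last_zero.symm
    · simp only [if_neg (show k ≠ 0 by omega), if_neg (show k + 1 ≠ 0 by omega)]
      rw [show n - k = n - (k + 1) + 1 by omega]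
      exact (hc.adj _ (by omega)).symm
  · simp only [if_neg (show n - 1 ≠ 0 by omega), if_pos, show n - (n - 1) = 1 by omega]
    exact (hc.adj 0 (by omega)).symm

lemma IsPathSeq.isCycleSeq_of_adj_of_adj {p : ℕ → V} (hp : G.IsPathSeq n p) {i : ℕ}
    (hi : i + 1 < n) (h0 : G.Adj (p 0) (p (i + 1))) (h1 : G.Adj (p i) (p (n - 1))) :
    G.IsCycleSeq n (fun j => if j < n - 1 - i then p (i + 1 + j) else p (n - 1 - j)) := by
  -- the cycle `p (i + 1), …, p (n - 1), p i, …, p 0`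
  refine ⟨⟨fun j hj k hk h => ?_, fun j hj => ?_⟩, ?_⟩
  · simp only [Set.mem_Iio] at hj hk
    split_ifs at h <;> have := hp.injOn (by simp; omega) (by simp; omega) h <;> omega
  · rcases Nat.lt_trichotomy (j + 1) (n - 1 - i) with h | h | h
    · rw [if_pos (by omega), if_pos h, show i + 1 + (j + 1) = i + 1 + j + 1 by omega]
      exact hp.adj _ (by omega)
    · rw [if_pos (by omega), if_neg (by omega), show i + 1 + j = n - 1 by omega,
        show n - 1 - (j + 1) = i by omega]
      exact h1.symm
    · rw [if_neg (by omega), if_neg (by omega), show n - 1 - j = n - 1 - (j + 1) + 1 by omega]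
      exact (hp.adj _ (by omega)).symm
  · simp only [if_neg (show ¬n - 1 < n - 1 - i by omega), if_pos (show 0 < n - 1 - i by omega),
      Nat.sub_self, Nat.add_zero]
    exact h0

lemma adj_of_sup_edge_adj {u v x y : V} (h : (G ⊔ edge u v).Adj x y)
    (hxy : s(x, y) ≠ s(u, v)) : G.Adj x y := by
  simp only [sup_adj, edge_adj] at h
  grind [Sym2.eq_swap]

lemma IsPathSeq.of_sup_edge {u v : V} {p : ℕ → V} (hp : (G ⊔ edge u v).IsPathSeq n p)
    (h0 : p 0 = u) (h1 : p 1 ≠ v) : G.IsPathSeq n p := by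
  refine ⟨hp.injOn, fun k hk => adj_of_sup_edge_adj (hp.adj k hk) fun h => ?_⟩
  rcases Sym2.eq_iff.1 h with ⟨hk0, hk1⟩ | ⟨-, hk1⟩
  · obtain rfl : k = 0 := hp.injOn (by simp; omega) (by simp; omega) (hk0.trans h0.symm)
    exact h1 hk1
  · have := hp.injOn (by simp; omega) (by simp; omega) (hk1.trans h0.symm)
    omega

section Hamiltonian

variable [Fintype V] [DecidableEq V]

lemma isHamiltonian_of_cycleGraph_isContained (h3 : 3 ≤ Fintype.card V)
    (h : cycleGraph (Fintype.card V) ⊑ G) : G.IsHamiltonian := by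
  obtain ⟨v, p, hp, hlen⟩ := (cycleGraph_isContained_iff (by omega)).1 h
  exact fun _ => ⟨v, p, Walk.isHamiltonianCycle_iff_isCycle_and_length_eq.2 ⟨hp, hlen⟩⟩

lemma isHamiltonian_top (h3 : 3 ≤ Fintype.card V) : (⊤ : SimpleGraph V).IsHamiltonian :=
  isHamiltonian_of_cycleGraph_isContained h3
    (isContained_top_iff.2 ⟨(Fintype.equivFin V).symm.toEmbedding⟩)

lemma IsCycleSeq.isHamiltonian {c : ℕ → V} (h3 : 3 ≤ Fintype.card V)
    (hc : G.IsCycleSeq (Fintype.card V) c) : G.IsHamiltonian :=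
  isHamiltonian_of_cycleGraph_isContained h3 hc.cycleGraph_isContained

lemma Walk.IsHamiltonianCycle.isCycleSeq_getVert {u : V} {w : G.Walk u u}
    (hw : w.IsHamiltonianCycle) : G.IsCycleSeq (Fintype.card V) w.getVert := by
  have hlen := hw.length_eq
  have h3 := hw.isCycle.three_le_length
  refine ⟨⟨fun i hi j hj h => ?_, fun k hk => w.adj_getVert_succ (by omega)⟩, ?_⟩
  · simp only [Set.mem_Iio] at hi hj
    exact hw.isCycle.getVert_injOn' (by simp; omega) (by simp; omega) h
  · have := w.adj_getVert_succ (i := Fintype.card V - 1) (by omega)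
    rw [w.getVert_zero]
    rwa [show Fintype.card V - 1 + 1 = w.length by omega, w.getVert_length] at this

lemma IsPathSeq.not_adj_of_adj {p : ℕ → V} (h3 : 3 ≤ Fintype.card V) (hG : ¬G.IsHamiltonian)
    (hp : G.IsPathSeq (Fintype.card V) p) {i : ℕ} (hi : i + 1 < Fintype.card V)
    (h0 : G.Adj (p 0) (p (i + 1))) : ¬G.Adj (p i) (p (Fintype.card V - 1)) :=
  fun h1 => hG ((hp.isCycleSeq_of_adj_of_adj hi h0 h1).isHamiltonian h3)

theorem exists_isPathSeq_of_isHamiltonian_sup_edge (h3 : 3 ≤ Fintype.card V)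
    (hG : ¬G.IsHamiltonian) {u v : V} (hH : (G ⊔ edge u v).IsHamiltonian) :
    ∃ p, G.IsPathSeq (Fintype.card V) p ∧ p 0 = u ∧ p (Fintype.card V - 1) = v := by
  have : Nontrivial V := Fintype.one_lt_card_iff_nontrivial.1 (by omega)
  obtain ⟨w, hw⟩ := hH.exists_isHamiltonianCycle u
  have hw' := hw.isCycleSeq_getVert
  have hinj : w.getVert (Fintype.card V - 1) ≠ w.getVert 1 := fun h => by
    have := hw'.injOn (by simp; omega) (by simp; omega) h
    omega
  -- Possibly reversing the cycle, the edge `uv` is not its first edge.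
  obtain ⟨c, hc, hc0, hc1⟩ :
      ∃ c, (G ⊔ edge u v).IsCycleSeq (Fintype.card V) c ∧ c 0 = u ∧ c 1 ≠ v := by
    by_cases h1 : w.getVert 1 = v
    · refine ⟨_, hw'.reflect, by simp, ?_⟩
      simpa [h1] using hinj
    · exact ⟨_, hw', w.getVert_zero, h1⟩
  have hp := hc.toIsPathSeq.of_sup_edge hc0 hc1
  refine ⟨c, hp, hc0, ?_⟩
  -- otherwise `c` is already a Hamiltonian cycle of `G`
  by_contra hlast
  refine hG (IsCycleSeq.isHamiltonian h3 ⟨hp, adj_of_sup_edge_adj hc.adj_last_zero fun h => ?_⟩)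
  rcases Sym2.eq_iff.1 h with ⟨h', -⟩ | ⟨h', -⟩
  · have := hc.injOn (by simp; omega) (by simp; omega) (h'.trans hc0.symm)
    omega
  · exact hlast h'

end Hamiltonian

lemma filter_range_adj_subset_Ico [DecidableRel G.Adj] (p : ℕ → V) (n : ℕ) :
    {i ∈ range n | G.Adj (p 0) (p i)} ⊆ Ico 1 n := fun i hi => by
  obtain ⟨hin, hadj⟩ := mem_filter.1 hi
  have : i ≠ 0 := by rintro rfl; exact G.loopless.irrefl _ hadj
  exact mem_Ico.2 ⟨by omega, mem_range.1 hin⟩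

section Degree

variable [Fintype V] [DecidableEq V] {p : ℕ → V}

lemma IsPathSeq.image_range_eq_univ (hp : G.IsPathSeq (Fintype.card V) p) :
    (range (Fintype.card V)).image p = univ :=
  eq_univ_of_card _ <| by rw [card_image_of_injOn (by simpa using hp.injOn), card_range]

variable [DecidableRel G.Adj]

lemma IsPathSeq.degree_eq (hp : G.IsPathSeq (Fintype.card V) p)
    (w : V) : G.degree w = #{i ∈ range (Fintype.card V) | G.Adj w (p i)} := by
  rw [← card_neighborFinset_eq_degree, neighborFinset_eq_filter, ← hp.image_range_eq_univ,
    filter_image, card_image_of_injOn]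
  exact hp.injOn.mono fun i hi => (mem_range.1 (mem_filter.1 hi).1)

lemma IsPathSeq.degree_add_degree_le (h3 : 3 ≤ Fintype.card V) (hG : ¬G.IsHamiltonian)
    (hp : G.IsPathSeq (Fintype.card V) p) :
    G.degree (p 0) + G.degree (p (Fintype.card V - 1)) ≤ Fintype.card V - 1 := by
  set n := Fintype.card V
  rw [hp.degree_eq, hp.degree_eq]
  set T := {i ∈ range n | G.Adj (p 0) (p i)}
  set S := {i ∈ range n | G.Adj (p (n - 1)) (p i)}
  have hS : ∀ i ∈ S, i + 1 < n := fun i hi => by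
    simp only [S, mem_filter, mem_range] at hi
    by_contra h
    exact G.loopless.irrefl _ (show i = n - 1 by omega ▸ hi.2)
  have hdisj : Disjoint T (S.map (addRightEmbedding 1)) := by
    refine Finset.disjoint_left.2 fun j hjT hjS => ?_
    obtain ⟨i, hiS, rfl⟩ := mem_map.1 hjS
    exact hp.not_adj_of_adj h3 hG (hS i hiS) (mem_filter.1 hjT).2 (mem_filter.1 hiS).2.symm
  calc #T + #S = #(T ∪ S.map (addRightEmbedding 1)) := by
        rw [card_union_of_disjoint hdisj, card_map]
    _ ≤ #(Ico 1 n) := card_le_card fun j hj => by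
        rcases mem_union.1 hj with hj | hj
        · exact filter_range_adj_subset_Ico p n hj
        · obtain ⟨i, hiS, rfl⟩ := mem_map.1 hj
          have := hS i hiS
          simp; omega
    _ = n - 1 := Nat.card_Ico 1 n

lemma IsPathSeq.degree_le_card_filter_degree_le (h3 : 3 ≤ Fintype.card V)
    (hG : ¬G.IsHamiltonian) (hp : G.IsPathSeq (Fintype.card V) p)
    (hmax : ∀ x, Gᶜ.Adj x (p (Fintype.card V - 1)) → G.degree x ≤ G.degree (p 0)) :
    G.degree (p 0) ≤ #{w | G.degree w ≤ G.degree (p 0)} := by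
  set n := Fintype.card V
  set T := {i ∈ range n | G.Adj (p 0) (p i)}
  have hT (i : ℕ) (hi : i ∈ T) : 1 ≤ i ∧ i < n :=
    mem_Ico.1 (filter_range_adj_subset_Ico p n hi)
  calc G.degree (p 0) = #T := hp.degree_eq _
    _ = #(T.image fun i => p (i - 1)) := by
        refine (card_image_of_injOn fun i hi j hj h => ?_).symm
        have := hT i hi; have := hT j hj
        have := hp.injOn (by simp; omega) (by simp; omega) h
        omega
    _ ≤ _ := card_le_card fun x hx => by
        obtain ⟨i, hi, rfl⟩ := mem_image.1 hx
        obtain ⟨hi1, hin⟩ := hT i hi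
        refine mem_filter.2 ⟨mem_univ _, hmax _ ⟨fun h => ?_, ?_⟩⟩
        · have := hp.injOn (by simp; omega) (by simp; omega) h
          omega
        · refine hp.not_adj_of_adj h3 hG (by omega) ?_
          rw [Nat.sub_add_cancel hi1]
          exact (mem_filter.1 hi).2

end Degree

section Chvatal

variable [Fintype V] [DecidableRel G.Adj]

lemma card_sub_degree_le_card_filter_degree_le {u : V} {m : ℕ}
    (h : ∀ w, ¬G.Adj u w → G.degree u + G.degree w ≤ m) :
    Fintype.card V - G.degree u ≤ #{w | G.degree w ≤ m - G.degree u} := by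
  have hcard := card_filter_add_card_filter_not (s := univ) (G.Adj u)
  rw [← neighborFinset_eq_filter, card_neighborFinset_eq_degree, card_univ] at hcard
  calc Fintype.card V - G.degree u = #{w | ¬G.Adj u w} := by omega
    _ ≤ _ := card_le_card <| monotone_filter_right _ fun w _ hw => by have := h w hw; omega

lemma exists_compl_adj_forall_degree_add_le (hG : G ≠ ⊤) :
    ∃ u v, Gᶜ.Adj u v ∧ G.degree u ≤ G.degree v ∧
      ∀ x y, Gᶜ.Adj x y → G.degree x + G.degree y ≤ G.degree u + G.degree v := by
  classical
  obtain ⟨a, b, hab⟩ := ne_bot_iff_exists_adj.1 (fun h => hG (compl_eq_bot.1 h))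
  obtain ⟨⟨u, v⟩, huv, hmax⟩ := exists_max_image {q : V × V | Gᶜ.Adj q.1 q.2}
    (fun q => G.degree q.1 + G.degree q.2) ⟨(a, b), by simpa using hab⟩
  have hmax' : ∀ x y, Gᶜ.Adj x y → G.degree x + G.degree y ≤ G.degree u + G.degree v :=
    fun x y hxy => hmax (x, y) (by simpa using hxy)
  replace huv : Gᶜ.Adj u v := by simpa using huv
  rcases le_total (G.degree u) (G.degree v) with h | h
  · exact ⟨u, v, huv, h, hmax'⟩
  · exact ⟨v, u, huv.symm, h, fun x y hxy => (hmax' x y hxy).trans_eq (add_comm _ _)⟩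

variable [DecidableEq V]

theorem exists_chvatal_index_of_forall_sup_edge (h3 : 3 ≤ Fintype.card V)
    (hG : ¬G.IsHamiltonian) (hsat : ∀ u v, Gᶜ.Adj u v → (G ⊔ edge u v).IsHamiltonian) :
    ∃ s, 1 ≤ s ∧ 2 * s < Fintype.card V ∧ s ≤ #{w | G.degree w ≤ s} ∧
      Fintype.card V - s ≤ #{w | G.degree w ≤ Fintype.card V - s - 1} := by
  obtain ⟨u, v, huv, hle, hmax⟩ :=
    exists_compl_adj_forall_degree_add_le (G := G) fun h => hG (h ▸ isHamiltonian_top h3)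
  obtain ⟨p, hp, rfl, rfl⟩ := exists_isPathSeq_of_isHamiltonian_sup_edge h3 hG (hsat _ _ huv)
  have hsum := hp.degree_add_degree_le h3 hG
  have hpos : 1 ≤ G.degree (p 0) := (G.degree_pos_iff_exists_adj _).2 ⟨_, hp.adj 0 (by omega)⟩
  refine ⟨G.degree (p 0), hpos, by omega, hp.degree_le_card_filter_degree_le h3 hG
    fun x hx => by have := hmax x _ hx; omega, ?_⟩
  have hnonadj (w : V) (hw : ¬G.Adj (p 0) w) :
      G.degree (p 0) + G.degree w ≤ Fintype.card V - 1 := by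
    by_cases hw0 : w = p 0
    · subst hw0; omega
    · have := hmax _ _ ⟨Ne.symm hw0, hw⟩; omega
  have := card_sub_degree_le_card_filter_degree_le hnonadj
  rwa [Nat.sub_right_comm] at this

theorem exists_chvatal_index_of_not_isHamiltonian (h3 : 3 ≤ Fintype.card V)
    (hG : ¬G.IsHamiltonian) :
    ∃ s, 1 ≤ s ∧ 2 * s < Fintype.card V ∧ s ≤ #{w | G.degree w ≤ s} ∧
      Fintype.card V - s ≤ #{w | G.degree w ≤ Fintype.card V - s - 1} := by
  classical
  obtain ⟨H, hGH, hH⟩ :=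
    Finite.exists_le_maximal (p := fun H : SimpleGraph V => ¬H.IsHamiltonian) hG
  have hsat : ∀ u v, Hᶜ.Adj u v → (H ⊔ edge u v).IsHamiltonian := fun u v huv => by
    by_contra h
    have hadj : (H ⊔ edge u v).Adj u v :=
      Or.inr ((edge_adj ..).2 ⟨Or.inl ⟨rfl, rfl⟩, huv.1⟩)
    exact huv.2 (hH.le_of_ge h le_sup_left hadj)
  obtain ⟨s, hs1, hs2, hlow, hhigh⟩ := exists_chvatal_index_of_forall_sup_edge h3 hH.prop hsat
  have hcount (c : ℕ) : #{w | H.degree w ≤ c} ≤ #{w | G.degree w ≤ c} :=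
    card_le_card <| monotone_filter_right _ fun w _ hw => (degree_le_of_le hGH).trans hw
  exact ⟨s, hs1, hs2, hlow.trans (hcount s), hhigh.trans (hcount _)⟩

end Chvatal

end SimpleGraph

lemma Monotone.apply_le_of_lt_card_filter_le {n : ℕ} {α : Type*} [LinearOrder α]
    {d : Fin n → α} (hd : Monotone d) {c : α} {i : Fin n} (hi : (i : ℕ) < #{j | d j ≤ c}) :
    d i ≤ c := by
  by_contra! h
  have hsub : ({j | d j ≤ c} : Finset (Fin n)) ⊆ Iio i := fun j hj => by
    simp only [mem_filter, mem_univ, true_and] at hj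
    exact mem_Iio.2 (lt_of_not_ge fun hij => (h.trans_le (hd hij)).not_ge hj)
  have := card_le_card hsub
  rw [Fin.card_Iio] at this
  omega

/-- Chvátal's theorem: if `G` has no Hamiltonian cycle, there is `1 ≤ s < n/2`
with `d_s ≤ s` and `d_{n-s} ≤ n - s - 1` (degrees in nondecreasing order). -/
theorem stmt_4 (n : ℕ) (hn : 3 ≤ n) (G : SimpleGraph (Fin n)) [DecidableRel G.Adj]
    (d : Fin n → ℕ) (hmono : Monotone d)
    (hperm : ∃ σ : Fin n ≃ Fin n, ∀ i, d i = G.degree (σ i))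
    (hG : ¬ G.IsHamiltonian) :
    ∃ s : ℕ, ∃ h1 : 1 ≤ s, ∃ h2 : 2 * s < n,
      d ⟨s - 1, by omega⟩ ≤ s ∧ d ⟨n - s - 1, by omega⟩ ≤ n - s - 1 := by
  obtain ⟨σ, hσ⟩ := hperm
  obtain ⟨s, hs1, hs2, hlow, hhigh⟩ :=
    exists_chvatal_index_of_not_isHamiltonian (by simpa using hn) hG
  simp only [Fintype.card_fin] at hs2 hhigh
  have hcount (c : ℕ) : #{i | d i ≤ c} = #{w | G.degree w ≤ c} :=
    card_equiv σ fun i => by simp [hσ]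
  refine ⟨s, hs1, hs2, hmono.apply_le_of_lt_card_filter_le ?_,
    hmono.apply_le_of_lt_card_filter_le ?_⟩
  · rw [hcount]; dsimp only; omega
  · rw [hcount]; dsimp only; omega
end

section
/- Let G be a graph of order n with degree sequence d_1 ≤ d_2 ≤ ... ≤ d_n. If G has no Hamiltonian path, then there exists an integer s with 1 ≤ s < (n+1)/2 such that d_s ≤ s-1 and d_{n-s+1} ≤ n-s-1. -/
open SimpleGraph Finset

/-!
Adding an apex adjacent to every vertex turns a Hamiltonian cycle of the cone over `G` into a
Hamiltonian path of `G`, and if the conclusion fails for `d` then the cone satisfies Chvátal's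
degree condition. Chvátal's theorem is proved by the closure argument. In an edge-maximal
non-Hamiltonian supergraph `H`, adding a missing edge `uv` creates a Hamiltonian cycle, which
then gives a Hamiltonian `u`–`v` path in `H`. Pósa's rotation then forces
`deg u + deg v < N`. Take the non-adjacent pair with the largest degree sum, where
`s = deg u ≤ deg v`. The non-neighbours of `v` give at least `s` vertices of degree `≤ s`, and
every vertex of degree `≥ N - s` is a neighbour of `u`. This contradicts the condition.
-/

section SortedSequence

variable {α : Type*} [Fintype α] {f : α → ℕ} {n : ℕ} (σ : Fin n ≃ α)

lemma card_filter_le_le_of_lt (hmono : Monotone fun i => f (σ i)) {k : Fin n} {t : ℕ}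
    (ht : t < f (σ k)) : #{a | f a ≤ t} ≤ k := by
  calc #{a | f a ≤ t} = #{i | f (σ i) ≤ t} := (card_equiv σ.symm (by simp)).trans rfl
    _ ≤ #(Iio k) := card_le_card fun i hi => by
        simp only [mem_filter, mem_univ, true_and, mem_Iio] at hi ⊢
        by_contra! hki
        exact absurd (hi.trans_lt ht) (hmono hki).not_gt
    _ = k := Fin.card_Iio k

lemma le_card_filter_le_of_le (hmono : Monotone fun i => f (σ i)) {k : Fin n} {t : ℕ}
    (ht : t ≤ f (σ k)) : n - k ≤ #{a | t ≤ f a} := by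
  calc n - k = #(Ici k) := (Fin.card_Ici k).symm
    _ ≤ #{i | t ≤ f (σ i)} := card_le_card fun i hi => by
        simp only [mem_filter, mem_univ, true_and, mem_Ici] at hi ⊢
        exact ht.trans (hmono hi)
    _ = #{a | t ≤ f a} := card_equiv σ (by simp)

end SortedSequence

lemma card_filter_option {α : Type*} [Fintype α] (p : Option α → Prop) [DecidablePred p] :
    #{w | p w} = #{a | p (some a)} + if p none then 1 else 0 := by
  simp only [card_filter, Fintype.sum_option, add_comm]

namespace SimpleGraph

section Orders

variable {V : Type*} (H : SimpleGraph V)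

def IsHamPathOrder {n : ℕ} (f : Fin (n + 1) ≃ V) : Prop :=
  ∀ i : Fin n, H.Adj (f i.castSucc) (f i.succ)

/-- A Hamiltonian cycle, encoded as a cyclic enumeration of all vertices. On two vertices a
single edge counts as one; this is harmless because the notion is only used when there are at
least three vertices. -/
def IsHamCycleOrder {n : ℕ} (f : Fin (n + 1) ≃ V) : Prop :=
  ∀ i, H.Adj (f i) (f (i + 1))

def HasHamCycleOrder : Prop :=
  ∃ (n : ℕ) (f : Fin (n + 1) ≃ V), H.IsHamCycleOrder f

variable {H} {n : ℕ} {f : Fin (n + 1) ≃ V}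

lemma IsHamCycleOrder.isHamPathOrder (hf : H.IsHamCycleOrder f) : H.IsHamPathOrder f :=
  fun i => Fin.coeSucc_eq_succ ▸ hf i.castSucc

lemma IsHamPathOrder.isHamCycleOrder (hf : H.IsHamPathOrder f)
    (hclose : H.Adj (f (Fin.last n)) (f 0)) : H.IsHamCycleOrder f := by
  intro i
  induction i using Fin.lastCases with
  | last => rwa [Fin.last_add_one]
  | cast j => rw [Fin.coeSucc_eq_succ]; exact hf j

lemma IsHamCycleOrder.addRight (hf : H.IsHamCycleOrder f) (k : Fin (n + 1)) :
    H.IsHamCycleOrder ((Equiv.addRight k).trans f) := by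
  intro i
  simpa [add_right_comm] using hf (i + k)

lemma IsHamPathOrder.adj_of_val_eq_succ (hf : H.IsHamPathOrder f) {a b : Fin (n + 1)}
    (hab : b.val = a.val + 1) : H.Adj (f a) (f b) := by
  have := hf ⟨a, by omega⟩
  rwa [show (⟨a, _⟩ : Fin n).castSucc = a from rfl,
    show (⟨a, _⟩ : Fin n).succ = b from Fin.ext hab.symm] at this

lemma hasHamCycleOrder_top [Fintype V] (hV : 1 < Fintype.card V) :
    (⊤ : SimpleGraph V).HasHamCycleOrder := by
  obtain ⟨n, hn⟩ : ∃ n, Fintype.card V = n + 1 :=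
    ⟨_, (Nat.succ_pred_eq_of_pos (by omega)).symm⟩
  refine ⟨n, (Fintype.equivFinOfCardEq hn).symm, fun i => ?_⟩
  have h1 : (1 : Fin (n + 1)) ≠ 0 := by rw [Ne, Fin.one_eq_zero_iff]; omega
  simpa using h1

lemma IsHamCycleOrder.exists_isHamPathOrder_of_sup_edge (hn : 2 ≤ n) {u v : V}
    (hf : (H ⊔ edge u v).IsHamCycleOrder f) (hH : ¬ H.HasHamCycleOrder) :
    ∃ g : Fin (n + 1) ≃ V, H.IsHamPathOrder g ∧ s(g (Fin.last n), g 0) = s(u, v) := by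
  obtain ⟨j, hj⟩ : ∃ j, ¬ H.Adj (f j) (f (j + 1)) := by
    by_contra! h
    exact hH ⟨n, f, h⟩
  obtain ⟨g, hg, hg_last, hg_zero⟩ : ∃ g : Fin (n + 1) ≃ V,
      (H ⊔ edge u v).IsHamCycleOrder g ∧ g (Fin.last n) = f j ∧ g 0 = f (j + 1) :=
    ⟨_, hf.addRight (j + 1), by simp [add_right_comm _ j, Fin.last_add_one], by simp⟩
  have hclose : s(g (Fin.last n), g 0) = s(u, v) := by
    have := hg (Fin.last n)
    rw [Fin.last_add_one, hg_last, hg_zero, sup_adj, adj_edge] at this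
    rw [hg_last, hg_zero]
    exact (this.resolve_left hj).1.symm
  refine ⟨g, fun i => (hg.isHamPathOrder i).resolve_right fun h => ?_, hclose⟩
  rw [adj_edge] at h
  have hi := h.1.symm.trans hclose.symm
  simp only [Sym2.eq_iff, EmbeddingLike.apply_eq_iff_eq, Fin.ext_iff, Fin.val_castSucc,
    Fin.val_succ, Fin.val_last, Fin.val_zero] at hi
  omega

lemma IsHamPathOrder.hasHamiltonianPath [DecidableEq V] (hf : H.IsHamPathOrder f) :
    HasHamiltonianPath H := by
  have hchain : (List.ofFn f).IsChain H.Adj := List.isChain_ofFn.mpr fun i hi => hf ⟨i, by omega⟩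
  refine ⟨_, _, Walk.ofSupport _ (by simp) hchain, fun v => ?_⟩
  rw [Walk.support_ofSupport]
  exact List.count_eq_one_of_mem (List.nodup_ofFn.mpr f.injective)
    ((List.mem_ofFn' _ _).mpr (f.surjective v))

end Orders

section Rotation

variable {V : Type*} [Fintype V] {H : SimpleGraph V} [DecidableRel H.Adj]

lemma degree_eq_card_filter_adj {α : Type*} [Fintype α] {e : α → V} (he : Function.Injective e)
    {x : V} (hx : ∀ w, H.Adj x w → w ∈ Set.range e) : H.degree x = #{a | H.Adj x (e a)} := by
  rw [← card_neighborFinset_eq_degree]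
  refine (card_nbij e (fun a ha => by simpa using ha) he.injOn fun w hw => ?_).symm
  obtain ⟨a, rfl⟩ := hx w (by simpa using hw)
  exact ⟨a, by simpa using hw, rfl⟩

lemma IsHamPathOrder.hasHamCycleOrder {n : ℕ} {f : Fin (n + 1) ≃ V} (hf : H.IsHamPathOrder f)
    (hdeg : n + 1 ≤ H.degree (f 0) + H.degree (f (Fin.last n))) : H.HasHamCycleOrder := by
  obtain ⟨i, hi⟩ : ∃ i : Fin n,
      H.Adj (f 0) (f i.succ) ∧ H.Adj (f (Fin.last n)) (f i.castSucc) := by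
    have hfirst : H.degree (f 0) = #{i : Fin n | H.Adj (f 0) (f i.succ)} :=
      degree_eq_card_filter_adj (f.injective.comp (Fin.succ_injective n)) fun w hw => by
        obtain ⟨y, hy⟩ := Fin.exists_succ_eq.mpr
          (show f.symm w ≠ 0 from fun h => H.ne_of_adj hw (by simp [← h]))
        exact ⟨y, by simp [hy]⟩
    have hlast : H.degree (f (Fin.last n)) =
        #{i : Fin n | H.Adj (f (Fin.last n)) (f i.castSucc)} :=
      degree_eq_card_filter_adj (f.injective.comp (Fin.castSucc_injective n)) fun w hw => by
        obtain ⟨y, hy⟩ := Fin.exists_castSucc_eq.mpr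
          (show f.symm w ≠ Fin.last n from fun h => H.ne_of_adj hw (by simp [← h]))
        exact ⟨y, by simp [hy]⟩
    rw [hfirst, hlast] at hdeg
    obtain ⟨i, hi⟩ := inter_nonempty_of_card_lt_card_add_card (filter_subset _ _)
      (filter_subset _ _) (by rw [card_fin]; exact hdeg)
    exact ⟨i, by simpa using hi⟩
  -- Pósa's rotation: the new cycle is `f 0, …, f i, f n, f (n - 1), …, f (i + 1)`.
  let ρ : Equiv.Perm (Fin (n + 1)) := Function.Involutive.toPerm
    (fun k => ⟨if k.val ≤ i.val then k else n + i + 1 - k, by split_ifs <;> omega⟩) fun k =>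
      Fin.ext (by dsimp only; split_ifs <;> omega)
  have hρ (k) : (ρ k).val = if k.val ≤ i.val then k.val else n + i + 1 - k := rfl
  have := i.isLt
  refine ⟨n, ρ.trans f, IsHamPathOrder.isHamCycleOrder (fun j => ?_) ?_⟩
  · have := j.isLt
    rcases lt_trichotomy j.val i.val with h | h | h
    · exact hf.adj_of_val_eq_succ (a := ρ j.castSucc) (b := ρ j.succ)
        (by rw [hρ, hρ]; simp only [Fin.val_castSucc, Fin.val_succ]; split_ifs <;> omega)
    · have h1 : ρ j.castSucc = i.castSucc := Fin.ext (by simp only [hρ]; simp [h])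
      have h2 : ρ j.succ = Fin.last n :=
        Fin.ext (by rw [hρ]; simp only [Fin.val_succ, Fin.val_last]; split_ifs <;> omega)
      simpa [h1, h2] using hi.2.symm
    · exact (hf.adj_of_val_eq_succ (a := ρ j.succ) (b := ρ j.castSucc)
        (by rw [hρ, hρ]; simp only [Fin.val_castSucc, Fin.val_succ]; split_ifs <;> omega)).symm
  · have h1 : ρ (Fin.last n) = i.succ :=
      Fin.ext (by rw [hρ]; simp only [Fin.val_succ, Fin.val_last]; split_ifs <;> omega)
    have h2 : ρ 0 = 0 := Fin.ext (by simp only [hρ]; simp)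
    simpa [h1, h2] using hi.1.symm

end Rotation

section Chvatal

variable {V : Type*} [Fintype V]

/-- Chvátal's condition `d_s ≤ s < N / 2 → d_{N-s} ≥ N - s` on the sorted degree sequence
`d_1 ≤ ⋯ ≤ d_N`, in counting form: `s` vertices of degree `≤ s` force `s + 1` vertices of
degree `≥ N - s`. -/
def ChvatalCondition (H : SimpleGraph V) [DecidableRel H.Adj] : Prop :=
  ∀ s, 1 ≤ s → 2 * s < Fintype.card V → s ≤ #{v | H.degree v ≤ s} →
    s < #{v | Fintype.card V - s ≤ H.degree v}

variable {H : SimpleGraph V} [DecidableRel H.Adj]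

lemma ChvatalCondition.mono {H' : SimpleGraph V} [DecidableRel H'.Adj] (hle : H ≤ H')
    (h : H.ChvatalCondition) : H'.ChvatalCondition := by
  intro s hs hsV hlow
  have hdeg (v : V) : H.degree v ≤ H'.degree v := degree_le_of_le hle
  refine (h s hs hsV (hlow.trans (card_le_card fun v => ?_))).trans_le
    (card_le_card fun v => ?_)
  · simp only [mem_filter, mem_univ, true_and]
    exact (hdeg v).trans
  · simp only [mem_filter, mem_univ, true_and]
    exact fun hv => hv.trans (hdeg v)

lemma degree_add_two_le_of_not_adj {u v : V} (huv : u ≠ v) (hnadj : ¬ H.Adj u v) :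
    H.degree v + 2 ≤ Fintype.card V := by
  classical
  have hu : u ∉ insert v (H.neighborFinset v) := by simpa [huv, adj_comm] using hnadj
  have := card_lt_univ_of_notMem hu
  rwa [card_insert_of_notMem (H.notMem_neighborFinset_self v),
    card_neighborFinset_eq_degree] at this

lemma not_chvatalCondition_of_max_nonadj {u v : V} (hV : 3 ≤ Fintype.card V) (huv : u ≠ v)
    (hnadj : ¬ H.Adj u v) (hle : H.degree u ≤ H.degree v)
    (hsum : H.degree u + H.degree v < Fintype.card V)
    (hmax : ∀ a b, a ≠ b → ¬ H.Adj a b → H.degree a + H.degree b ≤ H.degree u + H.degree v) :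
    ¬ H.ChvatalCondition := by
  classical
  intro hC
  -- the condition starts at `s = 1`, so `deg u = 0` is treated as `1`
  obtain ⟨t, ht⟩ : ∃ t, t = max (H.degree u) 1 := ⟨_, rfl⟩
  have hv := degree_add_two_le_of_not_adj huv hnadj
  have hlow : t ≤ #{w | H.degree w ≤ t} := by
    calc t ≤ #(insert v (H.neighborFinset v))ᶜ := by
          rw [card_compl, card_insert_of_notMem (H.notMem_neighborFinset_self v),
            card_neighborFinset_eq_degree]
          omega
      _ ≤ _ := card_le_card fun w hw => by
          simp only [mem_compl, mem_insert, mem_neighborFinset, not_or] at hw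
          have := hmax w v hw.1 fun h => hw.2 h.symm
          simp only [mem_filter, mem_univ, true_and]
          omega
  have hhigh : #{w | Fintype.card V - t ≤ H.degree w} ≤ t := by
    calc #{w | Fintype.card V - t ≤ H.degree w} ≤ #(H.neighborFinset u) :=
          card_le_card fun w hw => by
            simp only [mem_filter, mem_univ, true_and] at hw
            rw [mem_neighborFinset]
            by_contra hnw
            have hwu : u ≠ w := by rintro rfl; omega
            have := hmax u w hwu hnw
            omega
      _ ≤ t := by rw [card_neighborFinset_eq_degree]; omega
  have := hC t (by omega) (by omega) hlow
  omega

lemma degree_add_degree_lt_of_maximal (hV : 3 ≤ Fintype.card V)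
    (hH : Maximal (fun H : SimpleGraph V => ¬ H.HasHamCycleOrder) H) {u v : V} (huv : u ≠ v)
    (hnadj : ¬ H.Adj u v) : H.degree u + H.degree v < Fintype.card V := by
  by_contra! hsum
  obtain ⟨n, f, hf⟩ := not_not.mp (hH.not_prop_of_gt (H.lt_sup_edge _ _ huv hnadj))
  have hn : Fintype.card V = n + 1 := by simpa using (Fintype.card_congr f).symm
  obtain ⟨g, hg, hends⟩ := hf.exists_isHamPathOrder_of_sup_edge (by omega) hH.prop
  apply hH.prop
  apply hg.hasHamCycleOrder
  rcases Sym2.eq_iff.mp hends with ⟨h1, h2⟩ | ⟨h1, h2⟩ <;> rw [h1, h2] <;> omega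

lemma not_chvatalCondition_of_maximal (hV : 3 ≤ Fintype.card V)
    (hH : Maximal (fun H : SimpleGraph V => ¬ H.HasHamCycleOrder) H) : ¬ H.ChvatalCondition := by
  classical
  obtain ⟨a, b, hab, hnab⟩ : ∃ a b, a ≠ b ∧ ¬ H.Adj a b := by
    by_contra! h
    obtain rfl : H = ⊤ := by ext a b; exact ⟨fun h => h.ne, h a b⟩
    exact hH.prop (hasHamCycleOrder_top (by omega))
  obtain ⟨⟨u, v⟩, huv, hmax⟩ := exists_max_image {p : V × V | p.1 ≠ p.2 ∧ ¬ H.Adj p.1 p.2}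
    (fun p => H.degree p.1 + H.degree p.2) ⟨(a, b), by simp [hab, hnab]⟩
  simp only [mem_filter, mem_univ, true_and, and_imp, Prod.forall] at huv hmax
  obtain ⟨u, v, huv, hnadj, hle, hmax⟩ : ∃ u v, u ≠ v ∧ ¬ H.Adj u v ∧
      H.degree u ≤ H.degree v ∧
      ∀ a b, a ≠ b → ¬ H.Adj a b → H.degree a + H.degree b ≤ H.degree u + H.degree v := by
    rcases le_total (H.degree u) (H.degree v) with h | h
    · exact ⟨u, v, huv.1, huv.2, h, hmax⟩
    · exact ⟨v, u, huv.1.symm, fun h => huv.2 h.symm, h,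
        fun a b hab hn => (hmax a b hab hn).trans_eq (add_comm _ _)⟩
  exact not_chvatalCondition_of_max_nonadj hV huv hnadj hle
    (degree_add_degree_lt_of_maximal hV hH huv hnadj) hmax

theorem ChvatalCondition.hasHamCycleOrder (hV : 3 ≤ Fintype.card V) (h : H.ChvatalCondition) :
    H.HasHamCycleOrder := by
  classical
  by_contra hH
  obtain ⟨H', hle, hmax⟩ :=
    Finite.exists_le_maximal (p := fun H : SimpleGraph V => ¬ H.HasHamCycleOrder) hH
  exact not_chvatalCondition_of_maximal hV hmax (h.mono hle)

end Chvatal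

section Cone

variable {V : Type*} (G : SimpleGraph V)

def cone : SimpleGraph (Option V) where
  Adj
    | some x, some y => G.Adj x y
    | none, none => False
    | _, _ => True
  symm := ⟨by rintro (_ | x) (_ | y) h <;> first | trivial | exact h.symm⟩
  loopless := ⟨by rintro (_ | x) h <;> first | exact h | exact G.loopless.irrefl x h⟩

instance [DecidableRel G.Adj] : DecidableRel G.cone.Adj
  | some x, some y => inferInstanceAs (Decidable (G.Adj x y))
  | none, none => isFalse id
  | none, some _ => isTrue trivial
  | some _, none => isTrue trivial

variable {G}

@[simp] lemma cone_adj_some_some {x y : V} : G.cone.Adj (some x) (some y) ↔ G.Adj x y := Iff.rfl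

@[simp] lemma cone_adj_none_some {x : V} : G.cone.Adj none (some x) := trivial

@[simp] lemma cone_adj_some_none {x : V} : G.cone.Adj (some x) none := trivial

@[simp] lemma not_cone_adj_none_none : ¬ G.cone.Adj none none := id

lemma HasHamCycleOrder.hasHamiltonianPath_of_cone [DecidableEq V]
    (h : G.cone.HasHamCycleOrder) : HasHamiltonianPath G := by
  obtain ⟨_ | n, f, hf⟩ := h
  · exact absurd (hf 0) (by simp)
  obtain ⟨g, hg, hg0⟩ : ∃ g : Fin (n + 2) ≃ Option V, G.cone.IsHamCycleOrder g ∧ g 0 = none :=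
    ⟨_, hf.addRight (f.symm none), by simp⟩
  let e := ((finSuccEquiv (n + 1)).symm.trans g).removeNone
  have he (i : Fin (n + 1)) : g i.succ = some (e i) := by
    rw [Equiv.removeNone_some] <;> simp only [Equiv.trans_apply, finSuccEquiv_symm_some]
    rw [← Option.ne_none_iff_exists', ← hg0, Ne, g.apply_eq_iff_eq]
    exact Fin.succ_ne_zero i
  refine IsHamPathOrder.hasHamiltonianPath (f := e) fun i => ?_
  have := hg.isHamPathOrder i.succ
  rwa [← Fin.succ_castSucc, he, he, cone_adj_some_some] at this

variable [Fintype V] [DecidableRel G.Adj]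

@[simp] lemma degree_cone_some (v : V) : G.cone.degree (some v) = G.degree v + 1 := by
  simp only [← card_neighborFinset_eq_degree, neighborFinset_eq_filter, card_filter_option,
    cone_adj_some_some, cone_adj_some_none, if_true]

@[simp] lemma degree_cone_none : G.cone.degree none = Fintype.card V := by
  simp only [← card_neighborFinset_eq_degree, neighborFinset_eq_filter, card_filter_option,
    cone_adj_none_some, not_cone_adj_none_none, if_false, filter_true, card_univ, add_zero]

lemma chvatalCondition_cone (h : ∀ s, 1 ≤ s → 2 * s ≤ Fintype.card V →
      s ≤ #{v | G.degree v < s} → s ≤ #{v | Fintype.card V - s ≤ G.degree v}) :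
    G.cone.ChvatalCondition := by
  intro s hs hsV hlow
  rw [Fintype.card_option] at hsV ⊢
  rw [card_filter_option] at hlow ⊢
  simp only [degree_cone_some, degree_cone_none, Nat.add_one_le_iff] at hlow ⊢
  rw [if_neg (by omega)] at hlow
  rw [if_pos (by omega)]
  have hhigh : #{v | Fintype.card V + 1 - s ≤ G.degree v + 1} =
      #{v | Fintype.card V - s ≤ G.degree v} := by
    congr 1; ext v; simp only [mem_filter, mem_univ, true_and]; omega
  have := h s hs (by omega) hlow
  omega

end Cone

end SimpleGraph


/-- Chvátal's theorem for paths: if `G` has no Hamiltonian path, there is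
`1 ≤ s < (n+1)/2` with `d_s ≤ s - 1` and `d_{n-s+1} ≤ n - s - 1`. -/
theorem stmt_5 (n : ℕ) (hn : 2 ≤ n) (G : SimpleGraph (Fin n)) [DecidableRel G.Adj]
    (d : Fin n → ℕ) (hmono : Monotone d)
    (hperm : ∃ σ : Fin n ≃ Fin n, ∀ i, d i = G.degree (σ i))
    (hG : ¬ HasHamiltonianPath G) :
    ∃ s : ℕ, ∃ h1 : 1 ≤ s, ∃ h2 : 2 * s < n + 1,
      d ⟨s - 1, by omega⟩ ≤ s - 1 ∧ d ⟨n - s, by omega⟩ ≤ n - s - 1 := by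
  obtain ⟨σ, hσ⟩ := hperm
  obtain rfl : d = fun i => G.degree (σ i) := funext hσ
  by_contra! hd
  refine hG (ChvatalCondition.hasHamCycleOrder ?_ ?_).hasHamiltonianPath_of_cone
  · simp only [Fintype.card_option, Fintype.card_fin]
    omega
  refine chvatalCondition_cone fun s hs hsn hlow => ?_
  rw [Fintype.card_fin] at hsn ⊢
  have hlow' : G.degree (σ ⟨s - 1, by omega⟩) ≤ s - 1 := by
    by_contra! h
    have := card_filter_le_le_of_lt (f := fun v => G.degree v) σ hmono h
    simp only [Nat.le_sub_one_iff_lt (show 0 < s by omega)] at this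
    omega
  have hhigh : n - s ≤ G.degree (σ ⟨n - s, by omega⟩) := by
    have := hd s hs (by omega) hlow'
    omega
  have := le_card_filter_le_of_le (f := fun v => G.degree v) σ hmono hhigh
  simpa [show n - (n - s) = s by omega] using this
end

section
/- Let k ≥ 1, n ≥ k³/2 + k + 4, and let G be a spanning subgraph of M_k(n) with minimum degree δ(G) ≥ k. If G ≠ M_k(n), then λ(G) < n - k - 1. -/
open SimpleGraph Finset

/-! Replacing an eigenvector by its absolute value shows that the spectral radius of a graph is
at most the maximum of `wᵀ A w` over nonnegative unit vectors `w`. Since the independent vertices of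
`M_k(n)` have degree `k`, the condition `δ(G) ≥ k` forces all their edges, so `G` misses an edge
`ab` of the clique `K_{n-k}`. Write `T, Q` for the sum and square sum of `w` on the clique, `s` for
its sum on the join part and `i, q` for its sum and square sum on the independent part. Then
`wᵀ A(G) w ≤ T² - Q + 2 i s - 2 w_a w_b`, and with `m = n - k - 1` the estimate
`2 m i s ≤ m² q + k s²` reduces `wᵀ A(G) w < m` to `k s² ≤ (m - 1) ((m + 1) Q - T² + 2 w_a w_b)`.
For `w` constant equal to `t` on the clique the two sides are `k³ t²` and `2 (m - 1) t²`, which is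
where `n ≥ k³/2 + k + 4` comes from; the deviations of `w` from its mean on the clique are paid
for by the variance `(m + 1) Q - T²`, in cases according to how many of `a, b` lie in the join
part. -/

open Matrix

lemma two_mul_mul_le_of_sq_le_mul {c d κ : ℝ} (hc : 0 < c) (h : κ ^ 2 ≤ c * d) (A B : ℝ) :
    2 * κ * A * B ≤ c * A ^ 2 + d * B ^ 2 := by
  refine le_of_mul_le_mul_left ?_ hc
  nlinarith [sq_nonneg (c * A - κ * B), mul_nonneg (sub_nonneg.2 h) (sq_nonneg B)]

section Budget

/-! In the next three inequalities `t` is the mean of a vector on a clique of `m + 2` vertices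
containing a set `S` of size `k` and vertices `a ≠ b`; `za`, `zb` are the deviations from `t` at
`a`, `b`, and `v`, `W` the sum and square sum of the deviations over `S \ {a, b}`. The cases are
that none, one or both of `a`, `b` lie in `S`. -/

variable {k m : ℝ}

lemma budget_aux_cross (hm : k ^ 3 / 2 + 2 ≤ m) (t v : ℝ) :
    2 * k ^ 2 * t * v ≤ (2 * m - k ^ 3 - 2) * t ^ 2 + k ^ 4 / 2 * v ^ 2 :=
  two_mul_mul_le_of_sq_le_mul (by linarith)
    (by nlinarith [mul_nonneg (by linarith : (0 : ℝ) ≤ 2 * m - k ^ 3 - 4) (sq_nonneg (k ^ 2))]) t v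

lemma budget_aux_sq (hk : 1 ≤ k) (hm : k ^ 3 / 2 + 2 ≤ m) {v W : ℝ} (hW : 0 ≤ W)
    (hv : v ^ 2 ≤ k * W) : (k ^ 4 / 2 + k ^ 2 / 3 + k) * v ^ 2 ≤ m * (m + 2) * W := by
  have hk0 : (0 : ℝ) < k := by linarith
  have hm0 : 0 < m := by nlinarith [pow_pos hk0 3]
  have hkm : (k ^ 4 / 2 + k ^ 2 / 3 + k) * k ≤ m * (m + 2) := by
    nlinarith [mul_nonneg (sub_nonneg.2 hm) hm0.le,
      mul_nonneg (pow_nonneg hk0.le 4) (sq_nonneg (k - 2)),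
      mul_nonneg (pow_nonneg hk0.le 3) (sq_nonneg (k - 2)),
      mul_nonneg (sq_nonneg k) (sub_nonneg.2 hk),
      mul_nonneg (by linarith : (0 : ℝ) ≤ 2 * m - (k ^ 3 + 4)) (pow_nonneg hk0.le 3)]
  calc (k ^ 4 / 2 + k ^ 2 / 3 + k) * v ^ 2 ≤ (k ^ 4 / 2 + k ^ 2 / 3 + k) * (k * W) := by
        gcongr
    _ = ((k ^ 4 / 2 + k ^ 2 / 3 + k) * k) * W := by ring
    _ ≤ m * (m + 2) * W := by gcongr

lemma budget_none (hk : 1 ≤ k) (hm : k ^ 3 / 2 + 2 ≤ m) {t za zb v W : ℝ} (hW : 0 ≤ W)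
    (hv : v ^ 2 ≤ k * W) :
    k * (k * t + v) ^ 2 ≤ m * ((m + 2) * (W + za ^ 2 + zb ^ 2) + 2 * ((t + za) * (t + zb))) := by
  have hm0 : 0 < m := by nlinarith [pow_pos (by linarith : (0 : ℝ) < k) 3]
  nlinarith [budget_aux_cross hm t v, budget_aux_sq hk hm hW hv, sq_nonneg (t + m / 2 * (za + zb)),
    mul_nonneg hm0.le (sq_nonneg (za + zb)), mul_nonneg hm0.le (sq_nonneg (za - zb)),
    mul_nonneg (mul_nonneg hm0.le hm0.le) (sq_nonneg (za - zb)), sq_nonneg v]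

lemma budget_one (hk : 1 ≤ k) (hm : k ^ 3 / 2 + 2 ≤ m) {t za zb v W : ℝ} (hW : 0 ≤ W)
    (hv : v ^ 2 ≤ k * W) :
    k * (k * t + v + za) ^ 2
      ≤ m * ((m + 2) * (W + za ^ 2 + zb ^ 2) + 2 * ((t + za) * (t + zb))) := by
  have hk0 : (0 : ℝ) < k := by linarith
  have hm0 : 0 < m := by nlinarith [pow_pos hk0 3]
  have hzb : -(t + za) ^ 2 ≤ m * (m + 2) * zb ^ 2 + 2 * m * (t + za) * zb := by
    nlinarith [two_mul_mul_le_of_sq_le_mul (c := m * (m + 2)) (d := 1) (κ := -m) (by positivity)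
      (by nlinarith) zb (t + za)]
  have hc : 3 ≤ m ^ 2 + 2 * m - k - 1 - (m - k ^ 2 - 1) ^ 2 := by
    nlinarith [mul_nonneg (by linarith : (0 : ℝ) ≤ 2 * m - (k ^ 3 + 4)) (sq_nonneg k),
      mul_nonneg (pow_nonneg hk0.le 4) (sub_nonneg.2 hk),
      mul_nonneg (sq_nonneg k) (sub_nonneg.2 hk), sq_nonneg (k - 1)]
  nlinarith [budget_aux_cross hm t v, budget_aux_sq hk hm hW hv,
    sq_nonneg (t + (m - k ^ 2 - 1) * za),
    two_mul_mul_le_of_sq_le_mul (c := m ^ 2 + 2 * m - k - 1 - (m - k ^ 2 - 1) ^ 2)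
      (d := k ^ 2 / 3) (κ := k) (by linarith) (by nlinarith) za v]

lemma budget_two (hk : 1 ≤ k) (hm : k ^ 3 / 2 + 2 ≤ m) {t za zb v W : ℝ} (hW : 0 ≤ W)
    (hv : v ^ 2 ≤ k * W) :
    k * (k * t + v + za + zb) ^ 2
      ≤ m * ((m + 2) * (W + za ^ 2 + zb ^ 2) + 2 * ((t + za) * (t + zb))) := by
  have hk0 : (0 : ℝ) < k := by linarith
  have hm0 : 0 < m := by nlinarith [pow_pos hk0 3]
  have hc : 3 ≤ m * (m + 3) / 2 - k - (m - k ^ 2) ^ 2 / 2 := by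
    nlinarith [mul_nonneg (by linarith : (0 : ℝ) ≤ 2 * m - (k ^ 3 + 4)) (sq_nonneg k),
      mul_nonneg (pow_nonneg hk0.le 4) (sub_nonneg.2 hk),
      mul_nonneg (sq_nonneg k) (sub_nonneg.2 hk), sq_nonneg (k - 1)]
  nlinarith [budget_aux_cross hm t v, budget_aux_sq hk hm hW hv,
    sq_nonneg (t + (m - k ^ 2) / 2 * (za + zb)), mul_nonneg hm0.le (sq_nonneg (za - zb)),
    mul_nonneg (mul_nonneg hm0.le hm0.le) (sq_nonneg (za - zb)),
    two_mul_mul_le_of_sq_le_mul (c := m * (m + 3) / 2 - k - (m - k ^ 2) ^ 2 / 2)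
      (d := k ^ 2 / 3) (κ := k) (by linarith) (by nlinarith) (za + zb) v]

end Budget

lemma lt_of_mul_sq_le_variance {F T Q i q s p k m : ℝ} (hk : 0 < k) (hm : 0 < m)
    (hF : F + 2 * p ≤ T ^ 2 - Q + 2 * i * s) (hQq : Q + q = 1) (hiq : i ^ 2 ≤ k * q)
    (hs : k * s ^ 2 ≤ (m - 1) * ((m + 1) * Q - T ^ 2 + 2 * p))
    (hE : 0 < (m + 1) * Q - T ^ 2 + 2 * p) : F < m := by
  have hamgm : 2 * m * i * s ≤ m ^ 2 * q + k * s ^ 2 := by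
    refine le_of_mul_le_mul_left ?_ hk
    nlinarith [sq_nonneg (m * i - k * s), mul_nonneg (sq_nonneg m) (sub_nonneg.2 hiq)]
  have hQq' : m ^ 2 * Q + m ^ 2 * q = m ^ 2 := by rw [← mul_add, hQq, mul_one]
  have hmF := mul_le_mul_of_nonneg_left hF hm.le
  refine lt_of_mul_lt_mul_left (a := m) ?_ hm.le
  linarith

lemma two_mul_add_one_le_of_cube_le {k n : ℕ} (hn : (k : ℝ) ^ 3 / 2 + k + 4 ≤ n) :
    2 * k + 1 ≤ n := by
  have hk : (0 : ℝ) ≤ k := k.cast_nonneg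
  have : ((2 * k + 1 : ℕ) : ℝ) ≤ n := by
    push_cast; nlinarith [mul_nonneg hk (sq_nonneg ((k : ℝ) - 1)), sq_nonneg ((k : ℝ) - 1)]
  exact_mod_cast this

lemma Finset.card_mul_sum_sq_sub_mean {ι : Type*} (s : Finset ι) (f : ι → ℝ) :
    #s * ∑ i ∈ s, (f i - (∑ j ∈ s, f j) / #s) ^ 2 = #s * ∑ i ∈ s, f i ^ 2 - (∑ i ∈ s, f i) ^ 2 := by
  rcases s.eq_empty_or_nonempty with rfl | hs
  · simp
  have : (#s : ℝ) ≠ 0 := by exact_mod_cast hs.card_pos.ne'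
  simp only [sub_sq, sum_add_distrib, sum_sub_distrib, ← sum_mul, ← mul_sum, sum_const,
    nsmul_eq_mul]
  field_simp
  ring

lemma Finset.eq_sum_div_card_of_card_mul_sum_sq_eq {ι : Type*} {s : Finset ι} {f : ι → ℝ}
    (h : #s * ∑ i ∈ s, f i ^ 2 = (∑ i ∈ s, f i) ^ 2) {i : ι} (hi : i ∈ s) :
    f i = (∑ j ∈ s, f j) / #s := by
  have hvar := s.card_mul_sum_sq_sub_mean f
  rw [h, sub_self, mul_eq_zero, Nat.cast_eq_zero, card_eq_zero] at hvar
  have hzero := (sum_eq_zero_iff_of_nonneg fun _ _ => sq_nonneg _).1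
    (hvar.resolve_left (ne_empty_of_mem hi)) i hi
  exact sub_eq_zero.1 (pow_eq_zero_iff two_ne_zero |>.1 hzero)

lemma Finset.eq_zero_of_card_mul_sum_sq_eq_of_mul_eq_zero {ι : Type*} {s : Finset ι} {f : ι → ℝ}
    (h : #s * ∑ i ∈ s, f i ^ 2 = (∑ i ∈ s, f i) ^ 2) {a b : ι} (ha : a ∈ s) (hb : b ∈ s)
    (hab : f a * f b = 0) {i : ι} (hi : i ∈ s) : f i = 0 := by
  rw [eq_sum_div_card_of_card_mul_sum_sq_eq h ha, eq_sum_div_card_of_card_mul_sum_sq_eq h hb,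
    mul_self_eq_zero] at hab
  rw [eq_sum_div_card_of_card_mul_sum_sq_eq h hi, hab]

lemma card_mul_sq_sum_le_of_ne {V : Type*} [DecidableEq V] {S : Finset V} {m : ℝ}
    (hS : 1 ≤ #S) (hm : (#S : ℝ) ^ 3 / 2 + 2 ≤ m) {a b : V} (hab : a ≠ b) (w : V → ℝ) (t : ℝ) :
    #S * (∑ u ∈ S, w u) ^ 2 ≤ m * ((m + 2) * (∑ u ∈ (S.erase a).erase b, (w u - t) ^ 2
      + (w a - t) ^ 2 + (w b - t) ^ 2) + 2 * (w a * w b)) := by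
  set S' := (S.erase a).erase b
  have hk : (1 : ℝ) ≤ #S := by exact_mod_cast hS
  have hW : 0 ≤ ∑ u ∈ S', (w u - t) ^ 2 := sum_nonneg fun _ _ => sq_nonneg _
  have hv : (∑ u ∈ S', (w u - t)) ^ 2 ≤ #S * ∑ u ∈ S', (w u - t) ^ 2 :=
    sq_sum_le_card_mul_sum_sq.trans <| by gcongr; exact (erase_subset b _).trans (erase_subset a S)
  have hsum : ∑ u ∈ S, w u = #S * t + ∑ u ∈ S, (w u - t) := by
    rw [sum_sub_distrib, sum_const, nsmul_eq_mul]; ring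
  rw [hsum, show w a * w b = (t + (w a - t)) * (t + (w b - t)) by ring]
  by_cases haS : a ∈ S <;> by_cases hbS : b ∈ S
  · have hbS' : b ∈ S.erase a := mem_erase.2 ⟨hab.symm, hbS⟩
    rw [← add_sum_erase S _ haS, ← add_sum_erase _ _ hbS']
    exact le_of_eq_of_le (by ring) (budget_two hk hm hW hv)
  · have hS' : S' = S.erase a := erase_eq_of_notMem fun h => hbS (mem_of_mem_erase h)
    rw [← add_sum_erase S _ haS, ← hS']
    exact le_of_eq_of_le (by ring) (budget_one hk hm hW hv)
  · have hS' : S' = S.erase b := by simp only [S', erase_eq_of_notMem haS]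
    rw [← add_sum_erase S _ hbS, ← hS']
    exact le_of_eq_of_le (by ring)
      ((budget_one (t := t) (za := w b - t) (zb := w a - t) hk hm hW hv).trans_eq (by ring))
  · have hS' : S' = S := by simp only [S', erase_eq_of_notMem haS, erase_eq_of_notMem hbS]
    rw [show ∑ u ∈ S, (w u - t) = ∑ u ∈ S', (w u - t) by rw [hS']]
    exact le_of_eq_of_le (by ring) (budget_none hk hm hW hv)

lemma card_mul_sq_sum_le_of_subset {V : Type*} [DecidableEq V] {S W : Finset V} (hSW : S ⊆ W)
    (hS : 1 ≤ #S) (hW : (#S : ℝ) ^ 3 / 2 + 4 ≤ #W) {a b : V} (ha : a ∈ W) (hb : b ∈ W)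
    (hab : a ≠ b) (w : V → ℝ) :
    #S * (∑ u ∈ S, w u) ^ 2
      ≤ (#W - 2) * (#W * ∑ u ∈ W, w u ^ 2 - (∑ u ∈ W, w u) ^ 2 + 2 * (w a * w b)) := by
  set t := (∑ u ∈ W, w u) / #W
  set S' := (S.erase a).erase b
  have hm : (#S : ℝ) ^ 3 / 2 + 2 ≤ #W - 2 := by linarith
  have hW2 : (0 : ℝ) ≤ #W - 2 := by nlinarith [pow_nonneg (Nat.cast_nonneg (α := ℝ) #S) 3]
  have hbudget : ∑ u ∈ S', (w u - t) ^ 2 + (w a - t) ^ 2 + (w b - t) ^ 2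
      ≤ ∑ u ∈ W, (w u - t) ^ 2 := by
    have hbS' : b ∉ S' := notMem_erase b (S.erase a)
    have haS' : a ∉ insert b S' := by simp only [mem_insert, S', mem_erase]; tauto
    calc _ = ∑ u ∈ insert a (insert b S'), (w u - t) ^ 2 := by
          rw [sum_insert haS', sum_insert hbS']; ring
      _ ≤ _ := by
        refine sum_le_sum_of_subset_of_nonneg ?_ fun _ _ _ => sq_nonneg _
        simp only [insert_subset_iff, ha, hb, true_and, S']
        exact (erase_subset _ _).trans ((erase_subset _ _).trans hSW)
  refine (card_mul_sq_sum_le_of_ne hS hm hab w t).trans (mul_le_mul_of_nonneg_left ?_ hW2)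
  rw [← W.card_mul_sum_sq_sub_mean w, sub_add_cancel]
  gcongr

lemma dotProduct_mulVec_le_abs {ι : Type*} [Fintype ι] {A : Matrix ι ι ℝ} (hA : ∀ i j, 0 ≤ A i j)
    (v : ι → ℝ) : v ⬝ᵥ A *ᵥ v ≤ |v| ⬝ᵥ A *ᵥ |v| := by
  simp only [dotProduct, mulVec, mul_sum, Pi.abs_apply]
  refine sum_le_sum fun i _ => sum_le_sum fun j _ => ?_
  calc v i * (A i j * v j) = A i j * (v i * v j) := by ring
    _ ≤ A i j * (|v i| * |v j|) := by
      rw [← abs_mul]; exact mul_le_mul_of_nonneg_left (le_abs_self _) (hA i j)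
    _ = |v i| * (A i j * |v j|) := by ring

lemma Matrix.IsHermitian.eigenvalues_lt_of_forall_nonneg {ι : Type*} [Fintype ι] [DecidableEq ι]
    {A : Matrix ι ι ℝ} (hA : A.IsHermitian) (hA₀ : ∀ i j, 0 ≤ A i j) {c : ℝ}
    (h : ∀ w : ι → ℝ, 0 ≤ w → ∑ i, w i ^ 2 = 1 → w ⬝ᵥ A *ᵥ w < c) (i : ι) :
    hA.eigenvalues i < c := by
  set v := ⇑(hA.eigenvectorBasis i)
  have hv : ∑ j, |v| j ^ 2 = 1 := by
    have := hA.eigenvectorBasis.orthonormal.1 i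
    rw [EuclideanSpace.norm_eq, Real.sqrt_eq_one] at this
    simpa [Real.norm_eq_abs, sq_abs] using this
  calc hA.eigenvalues i = v ⬝ᵥ A *ᵥ v := by simpa using hA.eigenvalues_eq i
    _ ≤ |v| ⬝ᵥ A *ᵥ |v| := dotProduct_mulVec_le_abs hA₀ v
    _ < c := h |v| (abs_nonneg v) hv

namespace SimpleGraph

variable {V : Type*} [Fintype V]

lemma dotProduct_adjMatrix_mulVec (G : SimpleGraph V) [DecidableRel G.Adj] (w : V → ℝ) :
    w ⬝ᵥ G.adjMatrix ℝ *ᵥ w = ∑ u, ∑ x, if G.Adj u x then w u * w x else 0 := by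
  simp only [dotProduct, mulVec, mul_sum, adjMatrix_apply]
  refine sum_congr rfl fun u _ => sum_congr rfl fun x _ => ?_
  split_ifs <;> ring

lemma dotProduct_adjMatrix_mulVec_add_le {G H : SimpleGraph V} [DecidableRel G.Adj]
    [DecidableRel H.Adj] (hGH : G ≤ H) {a b : V} (hH : H.Adj a b) (hG : ¬ G.Adj a b)
    {w : V → ℝ} (hw : 0 ≤ w) :
    w ⬝ᵥ G.adjMatrix ℝ *ᵥ w + 2 * (w a * w b) ≤ w ⬝ᵥ H.adjMatrix ℝ *ᵥ w := by
  set f : V × V → ℝ := fun p =>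
    (if H.Adj p.1 p.2 then w p.1 * w p.2 else 0) - if G.Adj p.1 p.2 then w p.1 * w p.2 else 0
  have hf : ∀ p ∈ univ, 0 ≤ f p := fun p _ => by
    have := mul_nonneg (hw p.1) (hw p.2)
    by_cases hHp : H.Adj p.1 p.2
    · by_cases hGp : G.Adj p.1 p.2 <;> simp [f, hHp, hGp, this]
    · simp [f, hHp, if_neg (fun h => hHp (hGH h))]
  have hab : f (a, b) + f (b, a) = 2 * (w a * w b) := by
    simp only [f, if_pos hH, if_pos hH.symm, if_neg hG, if_neg (mt G.adj_symm hG)]; ring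
  have hsum := add_le_sum hf (mem_univ (a, b)) (mem_univ (b, a)) (by simp [hH.ne])
  simp only [dotProduct_adjMatrix_mulVec, f, Fintype.sum_prod_type, sum_sub_distrib] at hsum ⊢
  linarith

lemma dotProduct_adjMatrix_mulVec_eq_of_adj_iff [DecidableEq V] (G : SimpleGraph V)
    [DecidableRel G.Adj] {W P R : Finset V} (hPW : Disjoint P W) (hRW : R ⊆ W)
    (hadj : ∀ u x, G.Adj u x ↔ (u ∈ W ∧ x ∈ W ∧ u ≠ x) ∨ (u ∈ P ∧ x ∈ R) ∨ (u ∈ R ∧ x ∈ P))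
    (w : V → ℝ) :
    w ⬝ᵥ G.adjMatrix ℝ *ᵥ w
      = (∑ u ∈ W, w u) ^ 2 - ∑ u ∈ W, w u ^ 2 + 2 * (∑ u ∈ P, w u) * ∑ u ∈ R, w u := by
  let r (s : Finset V) (u : V) : ℝ := if u ∈ s then w u else 0
  have hr (s : Finset V) : ∑ u, r s u = ∑ u ∈ s, w u := by simp [r, sum_ite_mem]
  have hpt : ∀ u x, (if G.Adj u x then w u * w x else 0) = r W u * r W x
      - (if u = x then r W u * r W x else 0) + r P u * r R x + r R u * r P x := by
    intro u x
    have hP {y} (hy : y ∈ W) : y ∉ P := fun h => Finset.disjoint_left.1 hPW h hy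
    have hR {y} (hy : y ∉ W) : y ∉ R := fun h => hy (hRW h)
    by_cases hu : u ∈ W <;> by_cases hx : x ∈ W
    · by_cases hux : u = x <;> simp [r, hadj, hu, hx, hux, hP hu, hP hx]
    · by_cases u ∈ R <;> by_cases x ∈ P <;> simp [r, *]
    · by_cases u ∈ P <;> by_cases x ∈ R <;> simp [r, *]
    · by_cases hux : u = x <;> simp [r, hadj, hu, hx, hR hu, hR hx, hux]
  simp only [dotProduct_adjMatrix_mulVec, hpt, sum_add_distrib, sum_sub_distrib, sum_ite_eq,
    mem_univ, if_true, ← sum_mul_sum, hr]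
  simp [r, sq, sum_ite_mem]
  ring

end SimpleGraph

lemma specRad_lt_of_forall_nonneg {n : ℕ} (hn : 0 < n) (G : SimpleGraph (Fin n))
    [DecidableRel G.Adj] {c : ℝ}
    (h : ∀ w : Fin n → ℝ, 0 ≤ w → ∑ i, w i ^ 2 = 1 → w ⬝ᵥ G.adjMatrix ℝ *ᵥ w < c) :
    specRad G < c := by
  have : Nonempty (Fin n) := ⟨⟨0, hn⟩⟩
  suffices ∀ hA : (@adjMatrix ℝ _ G (Classical.decRel G.Adj) _ _).IsHermitian,
      ⨆ i, hA.eigenvalues i < c from this _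
  intro hA
  obtain ⟨i, hi⟩ := exists_eq_ciSup_of_finite (f := hA.eigenvalues)
  rw [← hi]
  refine hA.eigenvalues_lt_of_forall_nonneg (fun i j => ?_) (fun w hw hw1 => ?_) i
  · rw [adjMatrix_apply]; positivity
  · convert h w hw hw1

namespace Mgraph

def indepPart (k n : ℕ) : Finset (Fin n) := {v | v.val < k}

def joinPart (k n : ℕ) : Finset (Fin n) := {v | k ≤ v.val ∧ v.val < 2 * k}

def cliquePart (k n : ℕ) : Finset (Fin n) := {v | k ≤ v.val}

variable {k n : ℕ}

lemma card_indepPart (h : k ≤ n) : #(indepPart k n) = k := by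
  rw [indepPart, Fin.card_filter_val_lt, min_eq_right h]

lemma card_joinPart (h : 2 * k ≤ n) : #(joinPart k n) = k := by
  rw [← card_map Fin.valEmbedding]
  have : (joinPart k n).map Fin.valEmbedding = Ico k (2 * k) := by
    ext x; simp [joinPart, Fin.exists_iff]; omega
  rw [this, Nat.card_Ico]; omega

lemma card_cliquePart : #(cliquePart k n) = n - k := by
  rw [← card_map Fin.valEmbedding]
  have : (cliquePart k n).map Fin.valEmbedding = Ico k n := by
    ext x; simp [cliquePart, Fin.exists_iff]
  rw [this, Nat.card_Ico]

lemma compl_cliquePart : (cliquePart k n)ᶜ = indepPart k n := by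
  ext v; simp [cliquePart, indepPart]

lemma joinPart_subset_cliquePart : joinPart k n ⊆ cliquePart k n := fun v hv => by
  simp only [joinPart, cliquePart, mem_filter, mem_univ, true_and] at hv ⊢; exact hv.1

lemma disjoint_indepPart_cliquePart : Disjoint (indepPart k n) (cliquePart k n) := by
  rw [← compl_cliquePart]; exact disjoint_compl_left

lemma adj_iff {u x : Fin n} : (Mgraph k n).Adj u x ↔
    (u ∈ cliquePart k n ∧ x ∈ cliquePart k n ∧ u ≠ x) ∨ (u ∈ indepPart k n ∧ x ∈ joinPart k n) ∨
      (u ∈ joinPart k n ∧ x ∈ indepPart k n) := by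
  simp only [Mgraph, indepPart, joinPart, cliquePart, mem_filter, mem_univ, true_and, ne_eq,
    Fin.ext_iff]
  omega

lemma dotProduct_adjMatrix_mulVec (w : Fin n → ℝ) :
    w ⬝ᵥ (Mgraph k n).adjMatrix ℝ *ᵥ w = (∑ u ∈ cliquePart k n, w u) ^ 2
      - ∑ u ∈ cliquePart k n, w u ^ 2 + 2 * (∑ u ∈ indepPart k n, w u) * ∑ u ∈ joinPart k n, w u :=
  dotProduct_adjMatrix_mulVec_eq_of_adj_iff _ disjoint_indepPart_cliquePart
    joinPart_subset_cliquePart (fun _ _ => adj_iff) w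

/-- An independent vertex has degree `k` in `M_k(n)`, so none of its edges can be missing. -/
lemma mem_cliquePart_of_adj_of_not_adj {G : SimpleGraph (Fin n)} [DecidableRel G.Adj]
    (hGM : G ≤ Mgraph k n) (hδ : k ≤ G.minDegree) (h2k : 2 * k ≤ n) {a b : Fin n}
    (hM : (Mgraph k n).Adj a b) (hG : ¬ G.Adj a b) : a ∈ cliquePart k n := by
  by_contra ha
  have hjoin {z : Fin n} (hz : (Mgraph k n).Adj a z) : z ∈ joinPart k n := by
    rcases adj_iff.1 hz with h | h | h
    · exact absurd h.1 ha
    · exact h.2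
    · exact absurd (joinPart_subset_cliquePart h.1) ha
  have hb : b ∈ joinPart k n := hjoin hM
  have hsub : G.neighborFinset a ⊆ (joinPart k n).erase b := fun z hz => by
    rw [mem_neighborFinset] at hz
    exact mem_erase.2 ⟨fun hzb => hG (hzb ▸ hz), hjoin (hGM hz)⟩
  have hdeg := card_le_card hsub
  rw [card_erase_of_mem hb, card_joinPart h2k, card_neighborFinset_eq_degree] at hdeg
  have : a.val < k := by simpa [cliquePart] using ha
  have := G.minDegree_le_degree a
  omega

lemma dotProduct_adjMatrix_mulVec_lt {G : SimpleGraph (Fin n)} [DecidableRel G.Adj]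
    (hk : 1 ≤ k) (hn : (k : ℝ) ^ 3 / 2 + k + 4 ≤ n) (hGM : G ≤ Mgraph k n) {a b : Fin n}
    (hM : (Mgraph k n).Adj a b) (hG : ¬ G.Adj a b) (ha : a ∈ cliquePart k n)
    (hb : b ∈ cliquePart k n) {w : Fin n → ℝ} (hw : 0 ≤ w) (hw1 : ∑ u, w u ^ 2 = 1) :
    w ⬝ᵥ G.adjMatrix ℝ *ᵥ w < n - k - 1 := by
  have h2k := two_mul_add_one_le_of_cube_le hn
  set T := ∑ u ∈ cliquePart k n, w u
  set Q := ∑ u ∈ cliquePart k n, w u ^ 2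
  set i := ∑ u ∈ indepPart k n, w u
  set q := ∑ u ∈ indepPart k n, w u ^ 2
  set s := ∑ u ∈ joinPart k n, w u
  set m : ℝ := n - k - 1
  have hk1 : (1 : ℝ) ≤ k := by exact_mod_cast hk
  have hN : (#(cliquePart k n) : ℝ) = m + 1 := by
    rw [card_cliquePart, Nat.cast_sub (by omega)]; ring
  have hm : 0 < m := by linarith [pow_nonneg (Nat.cast_nonneg (α := ℝ) k) 3]
  have hform : w ⬝ᵥ G.adjMatrix ℝ *ᵥ w + 2 * (w a * w b) ≤ T ^ 2 - Q + 2 * i * s :=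
    (dotProduct_adjMatrix_mulVec_add_le hGM hM hG hw).trans_eq (dotProduct_adjMatrix_mulVec w)
  have hQq : Q + q = 1 := by rw [← hw1, ← sum_add_sum_compl (cliquePart k n), compl_cliquePart]
  have hiq : i ^ 2 ≤ k * q := by
    simpa [card_indepPart (by omega : k ≤ n)] using
      sq_sum_le_card_mul_sum_sq (s := indepPart k n) (f := w)
  have hkey : k * s ^ 2 ≤ (m - 1) * ((m + 1) * Q - T ^ 2 + 2 * (w a * w b)) := by
    have hS : #(joinPart k n) = k := card_joinPart (by omega)
    have := card_mul_sq_sum_le_of_subset joinPart_subset_cliquePart (hS.symm ▸ hk)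
      (by rw [hS, hN]; linarith) ha hb hM.ne w
    rwa [hS, hN, show m + 1 - 2 = m - 1 by ring] at this
  have hvar : T ^ 2 ≤ (m + 1) * Q := hN ▸ sq_sum_le_card_mul_sum_sq
  by_cases hE : 0 < (m + 1) * Q - T ^ 2 + 2 * (w a * w b)
  · exact lt_of_mul_sq_le_variance (by linarith) hm hform hQq hiq hkey hE
  -- Otherwise `w` is constant on the clique with `w a * w b = 0`, hence vanishes there.
  replace hE := not_lt.1 hE
  have hab : 0 ≤ w a * w b := mul_nonneg (hw a) (hw b)
  have hcard : (#(cliquePart k n) : ℝ) * Q = T ^ 2 := by rw [hN]; linarith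
  have hzero {u} (hu : u ∈ cliquePart k n) : w u = 0 :=
    eq_zero_of_card_mul_sum_sq_eq_of_mul_eq_zero hcard ha hb (by linarith) hu
  have hT : T = 0 := sum_eq_zero fun u hu => hzero hu
  have hQ : Q = 0 := sum_eq_zero fun u hu => by simp [hzero hu]
  have hs : s = 0 := by rw [hT, hQ] at hkey; nlinarith
  rw [hT, hQ, hs] at hform
  linarith

end Mgraph

/-- A proper spanning subgraph of `M_k(n)` with minimum degree at least `k`
has spectral radius less than `n - k - 1`. -/
theorem stmt_9 (k n : ℕ) (hk : 1 ≤ k) (hn : (n : ℝ) ≥ (k : ℝ) ^ 3 / 2 + k + 4)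
    (G : SimpleGraph (Fin n)) [DecidableRel G.Adj]
    (hsub : G ≤ Mgraph k n) (hδ : k ≤ G.minDegree) (hne : G ≠ Mgraph k n) :
    specRad G < (n : ℝ) - k - 1 := by
  have h2k := two_mul_add_one_le_of_cube_le hn
  obtain ⟨a, b, hM, hG⟩ : ∃ a b, (Mgraph k n).Adj a b ∧ ¬ G.Adj a b := by
    by_contra! h
    exact hne (le_antisymm hsub fun x y hM => h x y hM)
  have ha := Mgraph.mem_cliquePart_of_adj_of_not_adj hsub hδ (by omega) hM hG
  have hb := Mgraph.mem_cliquePart_of_adj_of_not_adj hsub hδ (by omega) hM.symm (mt G.adj_symm hG)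
  exact specRad_lt_of_forall_nonneg (by omega) G fun w hw hw1 =>
    Mgraph.dotProduct_adjMatrix_mulVec_lt hk hn hsub hM hG ha hb hw hw1
end

section
/- Let k ≥ 1, n ≥ k³/2 + k²/2 + k + 5, and let G be a spanning subgraph of K_{n-k-1} + K_{k+1} with minimum degree δ(G) ≥ k. If G ≠ K_{n-k-1} + K_{k+1}, then λ(G) < n - k - 2. -/
open SimpleGraph Finset

/-!
Gershgorin's theorem applied to `A²` shows that every adjacency eigenvalue `μ` satisfies
`μ² ≤ ∑_{u ∼ j} deg u` for some vertex `j`. In `K_a + K_{n-a}` this sum is `(a - 1)²` on the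
first clique and `(n - a - 1)²` on the second. Take `a = n - k - 1`. An edge missing from `G`
cannot lie in the `K_{k+1}`, since its ends would have degree `< k`; so it lies in the `K_a`, and
every vertex `j` of the `K_a` is adjacent there to an end of that edge, whose degree has dropped.
Hence the sum is `< (a - 1)² = (n - k - 2)²` at `j`, and at most `k² < (n - k - 2)²` on the
`K_{k+1}`.
-/

open Matrix

theorem Matrix.exists_eigenvalue_le_sum_row {ι : Type*} [Fintype ι] [DecidableEq ι]
    {B : Matrix ι ι ℝ} (hB : ∀ i j, 0 ≤ B i j) {μ : ℝ}
    (hμ : Module.End.HasEigenvalue (toLin' B) μ) : ∃ i, μ ≤ ∑ j, B i j := by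
  obtain ⟨i, hi⟩ := eigenvalue_mem_ball hμ
  refine ⟨i, ?_⟩
  rw [Metric.mem_closedBall, Real.dist_eq] at hi
  simp only [Real.norm_of_nonneg (hB i _)] at hi
  rw [← Finset.add_sum_erase _ _ (Finset.mem_univ i)]
  linarith [le_abs_self (μ - B i i)]

namespace SimpleGraph

section Spectrum

variable {V : Type*} [Fintype V] [DecidableEq V] (G : SimpleGraph V) [DecidableRel G.Adj]

theorem sum_adjMatrix_sq_apply (i : V) :
    ∑ j, (G.adjMatrix ℝ ^ 2) i j = ∑ u ∈ G.neighborFinset i, (G.degree u : ℝ) := by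
  have h :=
    congrFun (mulVec_mulVec (Function.const V (1 : ℝ)) (G.adjMatrix ℝ) (G.adjMatrix ℝ)) i
  rw [adjMatrix_mulVec_apply, ← sq] at h
  simp only [adjMatrix_mulVec_const_apply, mul_one] at h
  rw [h]
  simp [mulVec, dotProduct]

theorem exists_eigenvalue_sq_le_sum_degree (hA : (G.adjMatrix ℝ).IsHermitian) (i : V) :
    ∃ j, hA.eigenvalues i ^ 2 ≤ ∑ u ∈ G.neighborFinset j, (G.degree u : ℝ) := by
  have hμ : Module.End.HasEigenvalue (toLin' (G.adjMatrix ℝ)) (hA.eigenvalues i) := by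
    rw [Module.End.hasEigenvalue_iff_mem_spectrum, spectrum_toLin']
    exact hA.eigenvalues_mem_spectrum_real i
  have hμ2 := hμ.pow 2
  rw [← toLin'_pow] at hμ2
  have hnonneg : ∀ a b, 0 ≤ (G.adjMatrix ℝ ^ 2) a b := fun a b => by
    rw [sq, adjMatrix_mul_apply]
    exact Finset.sum_nonneg fun u _ => by rw [adjMatrix_apply]; split_ifs <;> norm_num
  obtain ⟨j, hj⟩ := exists_eigenvalue_le_sum_row hnonneg hμ2
  exact ⟨j, hj.trans_eq (G.sum_adjMatrix_sq_apply j)⟩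

end Spectrum

section Subgraph

variable {V : Type*} [Fintype V] {G H : SimpleGraph V} [DecidableRel G.Adj] [DecidableRel H.Adj]

theorem neighborFinset_subset_of_le (hle : G ≤ H) (v : V) :
    G.neighborFinset v ⊆ H.neighborFinset v := fun u hu => by
  rw [mem_neighborFinset] at hu ⊢
  exact hle hu

theorem degree_lt_degree_of_le_of_not_adj (hle : G ≤ H) {w x : V} (hH : H.Adj w x)
    (hG : ¬G.Adj w x) : G.degree w < H.degree w :=
  card_lt_card <| (ssubset_iff_of_subset (neighborFinset_subset_of_le hle w)).2
    ⟨x, (mem_neighborFinset _ _ _).2 hH, by rwa [mem_neighborFinset]⟩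

theorem sum_degree_neighborFinset_le_of_le (hle : G ≤ H) (v : V) :
    ∑ u ∈ G.neighborFinset v, G.degree u ≤ ∑ u ∈ H.neighborFinset v, H.degree u :=
  (sum_le_sum_of_subset (neighborFinset_subset_of_le hle v)).trans
    (sum_le_sum fun _ _ => degree_le_of_le hle)

theorem sum_degree_neighborFinset_lt_of_le (hle : G ≤ H) {v w x : V} (hvw : H.Adj v w)
    (hH : H.Adj w x) (hG : ¬G.Adj w x) :
    ∑ u ∈ G.neighborFinset v, G.degree u < ∑ u ∈ H.neighborFinset v, H.degree u :=
  (sum_le_sum_of_subset (neighborFinset_subset_of_le hle v)).trans_lt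
    (sum_lt_sum (fun _ _ => degree_le_of_le hle)
      ⟨w, (mem_neighborFinset _ _ _).2 hvw, degree_lt_degree_of_le_of_not_adj hle hH hG⟩)

end Subgraph

end SimpleGraph

theorem specRad_lt_of_sum_degree_lt {n : ℕ} (G : SimpleGraph (Fin n)) [DecidableRel G.Adj]
    {D : ℝ} (hD : 0 < D) (h : ∀ j, ∑ u ∈ G.neighborFinset j, (G.degree u : ℝ) < D ^ 2) :
    specRad G < D := by
  unfold specRad
  obtain rfl : ‹DecidableRel G.Adj› = Classical.decRel G.Adj := Subsingleton.elim _ _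
  classical
  generalize_proofs hA
  rcases isEmpty_or_nonempty (Fin n) with hn | hn
  · rwa [Real.iSup_of_isEmpty]
  obtain ⟨i, hi⟩ := exists_eq_ciSup_of_finite (f := hA.eigenvalues)
  obtain ⟨j, hj⟩ := G.exists_eigenvalue_sq_le_sum_degree hA i
  rw [← hi]
  exact (abs_lt_of_sq_lt_sq (hj.trans_lt (h j)) hD.le).trans_le' (le_abs_self _)

section DUgraph

variable {a n : ℕ}

theorem DUgraph_adj_iff {i j : Fin n} :
    (DUgraph a n).Adj i j ↔ i ≠ j ∧ (i.val < a ↔ j.val < a) := by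
  simp only [DUgraph]
  omega

theorem DUgraph_degree (ha : a ≤ n) (i : Fin n) :
    (DUgraph a n).degree i = if i.val < a then a - 1 else n - a - 1 := by
  have hnbr : (DUgraph a n).neighborFinset i =
      ({j | j.val < a ↔ i.val < a} : Finset (Fin n)).erase i := by
    ext j
    simp only [mem_neighborFinset, DUgraph_adj_iff, mem_erase, mem_filter, mem_univ, true_and]
    tauto
  have hlt : #{j : Fin n | j.val < a} = a := by rw [Fin.card_filter_val_lt]; omega
  have hge := card_filter_add_card_filter_not (s := univ) (fun j : Fin n => j.val < a)
  rw [← card_neighborFinset_eq_degree, hnbr, card_erase_of_mem (by simp)]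
  split_ifs with hi
  · simp only [hi, iff_true, hlt]
  · simp only [hi, iff_false]
    rw [card_univ, Fintype.card_fin, hlt] at hge
    omega

theorem DUgraph_sum_degree_neighborFinset (ha : a ≤ n) (i : Fin n) :
    ∑ j ∈ (DUgraph a n).neighborFinset i, (DUgraph a n).degree j =
      (DUgraph a n).degree i ^ 2 := by
  have hsame : ∀ j ∈ (DUgraph a n).neighborFinset i,
      (DUgraph a n).degree j = (DUgraph a n).degree i := fun j hj => by
    rw [mem_neighborFinset, DUgraph_adj_iff] at hj
    simp only [DUgraph_degree ha, hj.2]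
  rw [sum_congr rfl hsame, sum_const, card_neighborFinset_eq_degree, smul_eq_mul, sq]

theorem sum_degree_neighborFinset_lt_of_lt_DUgraph (ha : a ≤ n) (hsmall : n - a < a)
    (G : SimpleGraph (Fin n)) [DecidableRel G.Adj] (hsub : G ≤ DUgraph a n)
    (hδ : n - a - 1 ≤ G.minDegree) (hne : G ≠ DUgraph a n) (j : Fin n) :
    ∑ u ∈ G.neighborFinset j, G.degree u < (a - 1) ^ 2 := by
  obtain ⟨u, v, huv, hG⟩ : ∃ u v, (DUgraph a n).Adj u v ∧ ¬G.Adj u v := by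
    by_contra! h
    exact hne (le_antisymm hsub fun u v => h u v)
  have hu : u.val < a := by
    by_contra hu
    have hdeg := degree_lt_degree_of_le_of_not_adj hsub huv hG
    rw [DUgraph_degree ha, if_neg hu] at hdeg
    exact (hδ.trans (G.minDegree_le_degree u)).not_gt hdeg
  by_cases hj : j.val < a
  · obtain ⟨w, x, hjw, hwx, hGwx⟩ : ∃ w x, (DUgraph a n).Adj j w ∧ (DUgraph a n).Adj w x ∧
        ¬G.Adj w x := by
      by_cases hju : j = u
      · subst hju
        exact ⟨v, j, huv, huv.symm, fun h => hG h.symm⟩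
      · exact ⟨u, v, DUgraph_adj_iff.2 ⟨hju, by simp [hj, hu]⟩, huv, hG⟩
    calc _ < ∑ u ∈ (DUgraph a n).neighborFinset j, (DUgraph a n).degree u :=
          sum_degree_neighborFinset_lt_of_le hsub hjw hwx hGwx
      _ = (a - 1) ^ 2 := by rw [DUgraph_sum_degree_neighborFinset ha, DUgraph_degree ha, if_pos hj]
  · calc _ ≤ ∑ u ∈ (DUgraph a n).neighborFinset j, (DUgraph a n).degree u :=
          sum_degree_neighborFinset_le_of_le hsub j
      _ = (n - a - 1) ^ 2 := by
          rw [DUgraph_sum_degree_neighborFinset ha, DUgraph_degree ha, if_neg hj]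
      _ < (a - 1) ^ 2 := Nat.pow_lt_pow_left (by omega) two_ne_zero

end DUgraph

theorem stmt_12_general (k n : ℕ)
    (hn : (n : ℝ) ≥ (k : ℝ) ^ 3 / 2 + (k : ℝ) ^ 2 / 2 + k + 5)
    (G : SimpleGraph (Fin n)) [DecidableRel G.Adj]
    (hsub : G ≤ DUgraph (n - k - 1) n) (hδ : k ≤ G.minDegree)
    (hne : G ≠ DUgraph (n - k - 1) n) :
    specRad G < (n : ℝ) - k - 2 := by
  have hk : (0 : ℝ) ≤ k := k.cast_nonneg
  have hn_real : (2 * k + 3 : ℝ) ≤ n := by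
    nlinarith [pow_nonneg hk 3, sq_nonneg ((k : ℝ) - 1)]
  have hn_nat : 2 * k + 3 ≤ n := by exact_mod_cast hn_real
  have hsum := sum_degree_neighborFinset_lt_of_lt_DUgraph (by omega) (by omega) G hsub
    (by omega) hne
  have hcast : ((n - k - 1 - 1 : ℕ) : ℝ) = n - k - 2 := by
    rw [show n - k - 1 - 1 = n - (k + 2) by omega, Nat.cast_sub (by omega)]
    push_cast
    ring
  refine specRad_lt_of_sum_degree_lt G (by linarith) fun j => ?_
  rw [← hcast]
  exact_mod_cast hsum j

/-- A proper spanning subgraph of `K_{n-k-1} + K_{k+1}` with minimum degree at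
least `k` has spectral radius less than `n - k - 2`. -/
theorem stmt_12 (k n : ℕ) (hk : 1 ≤ k)
    (hn : (n : ℝ) ≥ (k : ℝ) ^ 3 / 2 + (k : ℝ) ^ 2 / 2 + k + 5)
    (G : SimpleGraph (Fin n)) [DecidableRel G.Adj]
    (hsub : G ≤ DUgraph (n - k - 1) n) (hδ : k ≤ G.minDegree)
    (hne : G ≠ DUgraph (n - k - 1) n) :
    specRad G < (n : ℝ) - k - 2 :=
  stmt_12_general k n hn G hsub hδ hne
end

section
/- If k ≥ 2 and 2k+1 ≤ n ≤ k³/2 + k²/2 + k + 2, then there exists a graph G of order n with minimum degree δ(G) ≥ k such that G is a proper spanning subgraph of N_k(n) and λ(G) > n - k - 2. -/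
open SimpleGraph Finset

/-!
Delete one edge of the clique `K_{n-k-1}` of `N_k(n)`: an edge inside the `k`-set `K_k` when
`n ≤ 2k + 2`, otherwise an edge between two vertices of `K_{n-2k-1}`. Either way every vertex keeps
its neighbours across the join (the `k + 1` independent vertices for a vertex of `K_k`, the `k`
vertices of `K_k` for any other vertex), so `δ ≥ k`. The spectral radius is at least the Rayleigh
quotient of any test vector. For `n ≤ 2k + 2` the all-ones vector already beats `n - k - 2`.
Otherwise take `L = n - k - 2` and the vector equal to `k` on the independent set, `L - 1` on the
ends of the deleted edge and `L` elsewhere: its Rayleigh quotient exceeds `L` by a positive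
multiple of `k³ + k² + 2 - 2L`, which is where the upper bound on `n` comes from.
-/

open Matrix

theorem Matrix.IsHermitian.lt_iSup_eigenvalues_of_lt_dotProduct {m : Type*} [Fintype m]
    [DecidableEq m] {A : Matrix m m ℝ} (hA : A.IsHermitian) {c : ℝ} {x : m → ℝ}
    (h : c * (x ⬝ᵥ x) < x ⬝ᵥ (A *ᵥ x)) : c < ⨆ i, hA.eigenvalues i := by
  by_contra! hc
  have hpsd : (algebraMap ℝ (Matrix m m ℝ) c - A).PosSemidef := by
    refine posSemidef_iff_isHermitian_and_spectrum_nonneg.mpr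
      ⟨(IsSelfAdjoint.algebraMap _ (.all c)).sub hA, ?_⟩
    rw [← spectrum.singleton_sub_eq, hA.spectrum_real_eq_range_eigenvalues]
    rintro _ ⟨a, ha, _, ⟨i, rfl⟩, rfl⟩
    rw [Set.mem_singleton_iff.mp ha]
    exact sub_nonneg.mpr ((le_ciSup (Set.finite_range _).bddAbove i).trans hc)
  have := hpsd.dotProduct_mulVec_nonneg x
  simp only [star_trivial, Algebra.algebraMap_eq_smul_one, sub_mulVec, smul_mulVec, one_mulVec,
    dotProduct_sub, dotProduct_smul, smul_eq_mul, sub_nonneg] at this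
  linarith

theorem lt_specRad_of_lt_dotProduct {n : ℕ} (G : SimpleGraph (Fin n)) [DecidableRel G.Adj]
    {c : ℝ} {x : Fin n → ℝ} (h : c * (x ⬝ᵥ x) < x ⬝ᵥ (G.adjMatrix ℝ *ᵥ x)) :
    c < specRad G := by
  have hA := isHermitian_adjMatrix ℝ G
  obtain rfl : ‹DecidableRel G.Adj› = Classical.decRel G.Adj := Subsingleton.elim _ _
  exact hA.lt_iSup_eigenvalues_of_lt_dotProduct h

theorem SimpleGraph.deleteEdges_lt_of_adj {V : Type*} {G : SimpleGraph V} {p q : V}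
    (h : G.Adj p q) : G.deleteEdges {s(p, q)} < G :=
  lt_of_le_of_ne (G.deleteEdges_le _) fun he => by
    have := he ▸ h
    simp at this

theorem SimpleGraph.dotProduct_adjMatrix_deleteEdges_mulVec {V R : Type*} [Fintype V]
    [DecidableEq V] [CommRing R] {G : SimpleGraph V} [DecidableRel G.Adj] {p q : V}
    (h : G.Adj p q) (x : V → R) :
    x ⬝ᵥ ((G.deleteEdges {s(p, q)}).adjMatrix R *ᵥ x) =
      x ⬝ᵥ (G.adjMatrix R *ᵥ x) - 2 * x p * x q := by
  have hA : G.adjMatrix R =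
      (G.deleteEdges {s(p, q)}).adjMatrix R + single p q 1 + single q p 1 := by
    ext i j
    simp only [Matrix.add_apply, adjMatrix_apply, deleteEdges_adj, single_apply,
      Set.mem_singleton_iff, Sym2.eq, Sym2.rel_iff']
    split_ifs <;> grind [Adj.ne, Adj.symm]
  rw [hA, add_mulVec, add_mulVec, dotProduct_add, dotProduct_add, single_mulVec_eq,
    single_mulVec_eq]
  simp only [dotProduct_smul, dotProduct_single_one, smul_eq_mul]
  ring

theorem SimpleGraph.card_le_degree_of_forall_adj {n : ℕ} (G : SimpleGraph (Fin n))
    [DecidableRel G.Adj] {v : Fin n} {s : Finset ℕ} (hs : ∀ m ∈ s, m < n)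
    (hadj : ∀ m (hm : m ∈ s), G.Adj v ⟨m, hs m hm⟩) : #s ≤ G.degree v := by
  rw [← card_neighborFinset_eq_degree, ← card_attachFin s hs]
  exact card_le_card fun w hw =>
    (mem_neighborFinset _ _ _).mpr (hadj w ((mem_attachFin hs).mp hw))

theorem Fin.sum_ite_val_mem_eq_sum {M : Type*} [AddCommMonoid M] {n : ℕ} {s : Finset ℕ}
    (hs : s ⊆ range n) (f : ℕ → M) :
    ∑ i : Fin n, (if (i : ℕ) ∈ s then f i else 0) = ∑ m ∈ s, f m := by
  rw [Fin.sum_univ_eq_sum_range (fun m => if m ∈ s then f m else 0), sum_ite_mem,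
    inter_eq_right.mpr hs]

theorem Finset.sum_Ico_eq_of_forall_eq {R : Type*} [Ring R] {a b : ℕ} (hab : a ≤ b)
    {f : ℕ → R} {c : R} (h : ∀ m ∈ Ico a b, f m = c) :
    ∑ m ∈ Ico a b, f m = ((b : R) - a) * c := by
  rw [sum_eq_card_nsmul h, Nat.card_Ico, nsmul_eq_mul, Nat.cast_sub hab]

theorem Ngraph_adj {k n : ℕ} {i j : Fin n} : (Ngraph k n).Adj i j ↔ i ≠ j ∧
    ((k + 1 ≤ i.val ∧ k + 1 ≤ j.val) ∨
      (i.val < k + 1 ∧ k + 1 ≤ j.val ∧ j.val < 2 * k + 1) ∨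
      (j.val < k + 1 ∧ k + 1 ≤ i.val ∧ i.val < 2 * k + 1)) :=
  Iff.rfl

theorem Ngraph_adj_mk_of_le {k n p q : ℕ} (hpn : p < n) (hqn : q < n) (hpq : p ≠ q)
    (hp : k + 1 ≤ p) (hq : k + 1 ≤ q) : (Ngraph k n).Adj ⟨p, hpn⟩ ⟨q, hqn⟩ :=
  ⟨Fin.ne_of_val_ne hpq, Or.inl ⟨hp, hq⟩⟩

theorem dotProduct_adjMatrix_Ngraph_mulVec {k n : ℕ} (hn : 2 * k + 1 ≤ n) (g : ℕ → ℝ) :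
    (g ∘ Fin.val) ⬝ᵥ ((Ngraph k n).adjMatrix ℝ *ᵥ (g ∘ Fin.val)) =
      2 * (∑ m ∈ range (k + 1), g m) * (∑ m ∈ Ico (k + 1) (2 * k + 1), g m)
        + (∑ m ∈ Ico (k + 1) n, g m) ^ 2 - ∑ m ∈ Ico (k + 1) n, g m ^ 2 := by
  set P := range (k + 1)
  set Q := Ico (k + 1) (2 * k + 1)
  set C := Ico (k + 1) n
  let y (s : Finset ℕ) (i : Fin n) : ℝ := if (i : ℕ) ∈ s then g i else 0
  have entry (i j : Fin n) : g i * ((Ngraph k n).adjMatrix ℝ i j * g j) =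
      y P i * y Q j + y Q i * y P j + y C i * y C j
        - if i = j then (if (i : ℕ) ∈ C then g i ^ 2 else 0) else 0 := by
    have := i.isLt; have := j.isLt
    simp only [y, P, Q, C, adjMatrix_apply, Ngraph_adj, mem_range, mem_Ico, ne_eq, Fin.ext_iff]
    split_ifs <;> first | omega | ring1 | (simp only [‹(i : ℕ) = j›]; ring)
  have hsum (s : Finset ℕ) (hs : s ⊆ range n) : ∑ i, y s i = ∑ m ∈ s, g m :=
    Fin.sum_ite_val_mem_eq_sum hs g
  have hP : P ⊆ range n := range_subset_range.mpr (by omega)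
  have hQ : Q ⊆ range n := fun m hm => by simp only [Q, mem_Ico, mem_range] at hm ⊢; omega
  have hC : C ⊆ range n := fun m hm => by simp only [C, mem_Ico, mem_range] at hm ⊢; omega
  have expand : (g ∘ Fin.val) ⬝ᵥ ((Ngraph k n).adjMatrix ℝ *ᵥ (g ∘ Fin.val)) =
      ∑ i : Fin n, ∑ j : Fin n, g i * ((Ngraph k n).adjMatrix ℝ i j * g j) := by
    simp only [dotProduct, mulVec, Function.comp_apply, mul_sum]
  simp only [expand, entry, sum_sub_distrib, sum_add_distrib, sum_ite_eq, mem_univ, if_true,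
    ← mul_sum, ← sum_mul, hsum P hP, hsum Q hQ, hsum C hC,
    Fin.sum_ite_val_mem_eq_sum hC fun m => g m ^ 2]
  ring

theorem le_minDegree_Ngraph_deleteEdges {k n p q : ℕ} (hn : 2 * k + 1 ≤ n) (hpn : p < n)
    (hqn : q < n) (hp : k + 1 ≤ p) (hq : k + 1 ≤ q) (hpq : p < 2 * k + 1 ↔ q < 2 * k + 1) :
    k ≤ ((Ngraph k n).deleteEdges {s(⟨p, hpn⟩, ⟨q, hqn⟩)}).minDegree := by
  have : Nonempty (Fin n) := ⟨⟨0, by omega⟩⟩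
  refine le_minDegree_of_forall_le_degree _ _ fun v => ?_
  by_cases hv : k + 1 ≤ v ∧ v < 2 * k + 1
  · calc k ≤ #(range (k + 1)) := by simp
      _ ≤ _ := card_le_degree_of_forall_adj _ (fun m hm => by rw [mem_range] at hm; omega)
          fun m hm => by
            rw [mem_range] at hm
            simp only [deleteEdges_adj, Ngraph_adj, Set.mem_singleton_iff, Sym2.eq_iff, ne_eq,
              Fin.ext_iff]
            omega
  · calc k = #(Ico (k + 1) (2 * k + 1)) := by simp only [Nat.card_Ico]; omega
      _ ≤ _ := card_le_degree_of_forall_adj _ (fun m hm => by rw [mem_Ico] at hm; omega)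
          fun m hm => by
            rw [mem_Ico] at hm
            simp only [deleteEdges_adj, Ngraph_adj, Set.mem_singleton_iff, Sym2.eq_iff, ne_eq,
              Fin.ext_iff]
            omega

theorem lt_specRad_Ngraph_deleteEdges_of_le {k n : ℕ} (hk : 2 ≤ k) (hn1 : 2 * k + 1 ≤ n)
    (hn2 : n ≤ 2 * k + 2) :
    (n : ℝ) - k - 2 <
      specRad ((Ngraph k n).deleteEdges {s(⟨k + 1, by omega⟩, ⟨k + 2, by omega⟩)}) := by
  refine lt_specRad_of_lt_dotProduct _ (x := (fun _ => (1 : ℝ)) ∘ Fin.val) ?_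
  rw [dotProduct_adjMatrix_deleteEdges_mulVec (Ngraph_adj_mk_of_le _ _ (by omega) le_rfl
      (by omega)), dotProduct_adjMatrix_Ngraph_mulVec hn1]
  simp only [dotProduct, Function.comp_apply, mul_one, sum_const, card_univ, Fintype.card_fin,
    nsmul_eq_mul, card_range, Nat.card_Ico, one_pow]
  rw [show 2 * k + 1 - (k + 1) = k by omega, Nat.cast_sub (by omega : k + 1 ≤ n)]
  have hk' : (2 : ℝ) ≤ k := by exact_mod_cast hk
  have hn2' : (n : ℝ) ≤ 2 * k + 2 := by exact_mod_cast hn2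
  push_cast
  nlinarith [mul_nonneg (by linarith : (0 : ℝ) ≤ k + 1) (sub_nonneg.mpr hn2')]

theorem lt_specRad_Ngraph_deleteEdges_of_ge {k n : ℕ} (hn1 : 2 * k + 3 ≤ n)
    (hn2 : (n : ℝ) ≤ (k : ℝ) ^ 3 / 2 + (k : ℝ) ^ 2 / 2 + k + 2) :
    (n : ℝ) - k - 2 < specRad
      ((Ngraph k n).deleteEdges {s(⟨2 * k + 1, by omega⟩, ⟨2 * k + 2, by omega⟩)}) := by
  set L : ℝ := n - k - 2 with hL_def
  set g : ℕ → ℝ := fun m =>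
    if m < k + 1 then k else if m = 2 * k + 1 ∨ m = 2 * k + 2 then L - 1 else L
  have gP : ∀ m ∈ range (k + 1), g m = k := fun m hm => if_pos (mem_range.mp hm)
  have gQ : ∀ m ∈ Ico (k + 1) (2 * k + 1), g m = L := fun m hm => by
    rw [mem_Ico] at hm; simp only [g]; rw [if_neg (by omega), if_neg (by omega)]
  have gD : ∀ m ∈ Ico (2 * k + 1) (2 * k + 3), g m = L - 1 := fun m hm => by
    rw [mem_Ico] at hm; simp only [g]; rw [if_neg (by omega), if_pos (by omega)]
  have gR : ∀ m ∈ Ico (2 * k + 3) n, g m = L := fun m hm => by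
    rw [mem_Ico] at hm; simp only [g]; rw [if_neg (by omega), if_neg (by omega)]
  have sumP (φ : ℝ → ℝ) : ∑ m ∈ range (k + 1), φ (g m) = (k + 1) * φ k := by
    simp [sum_eq_card_nsmul fun m hm => congrArg φ (gP m hm)]
  have sumQ : ∑ m ∈ Ico (k + 1) (2 * k + 1), g m = k * L := by
    rw [sum_Ico_eq_of_forall_eq (by omega) gQ]; push_cast; ring
  have sumC (φ : ℝ → ℝ) :
      ∑ m ∈ Ico (k + 1) n, φ (g m) = k * φ L + 2 * φ (L - 1) + (L - k - 1) * φ L := by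
    rw [← sum_Ico_consecutive _ (show k + 1 ≤ 2 * k + 1 by omega) (by omega),
      ← sum_Ico_consecutive _ (show 2 * k + 1 ≤ 2 * k + 3 by omega) hn1,
      sum_Ico_eq_of_forall_eq (by omega) fun m hm => congrArg φ (gQ m hm),
      sum_Ico_eq_of_forall_eq (by omega) fun m hm => congrArg φ (gD m hm),
      sum_Ico_eq_of_forall_eq hn1 fun m hm => congrArg φ (gR m hm)]
    push_cast; ring
  have hxx : (g ∘ Fin.val : Fin n → ℝ) ⬝ᵥ (g ∘ Fin.val) =
      (k + 1) * k ^ 2 + (k * L ^ 2 + 2 * (L - 1) ^ 2 + (L - k - 1) * L ^ 2) := by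
    simp only [dotProduct, Function.comp_apply]
    rw [Fin.sum_univ_eq_sum_range (fun m => g m * g m),
      ← sum_range_add_sum_Ico _ (show k + 1 ≤ n by omega)]
    simp only [← sq, sumP fun t => t ^ 2, sumC fun t => t ^ 2]
  refine lt_specRad_of_lt_dotProduct _ (x := g ∘ Fin.val) ?_
  rw [dotProduct_adjMatrix_deleteEdges_mulVec (Ngraph_adj_mk_of_le _ _ (by omega) (by omega)
      (by omega)), dotProduct_adjMatrix_Ngraph_mulVec (by omega), sumP fun t => t, sumQ,
    sumC fun t => t, sumC fun t => t ^ 2, hxx, Function.comp_apply, Function.comp_apply,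
    gD _ (by simp), gD _ (by simp)]
  have hL : 0 < L := by
    have h1 : (2 * k + 3 : ℝ) ≤ n := by exact_mod_cast hn1
    have h2 : (0 : ℝ) ≤ k := k.cast_nonneg
    linarith
  have hM : 0 < (k : ℝ) ^ 3 + k ^ 2 + 2 - 2 * L := by linarith
  linarith [mul_pos hL hM]

/-- For `k ≥ 2` and `2k+1 ≤ n ≤ k³/2 + k²/2 + k + 2`, there is a proper
spanning subgraph of `N_k(n)` with minimum degree at least `k` and spectral
radius exceeding `n - k - 2`. -/
theorem stmt_16 (k n : ℕ) (hk : 2 ≤ k) (hn1 : 2 * k + 1 ≤ n)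
    (hn2 : (n : ℝ) ≤ (k : ℝ) ^ 3 / 2 + (k : ℝ) ^ 2 / 2 + k + 2) :
    ∃ G : SimpleGraph (Fin n), ∃ _ : DecidableRel G.Adj,
      k ≤ G.minDegree ∧ G < Ngraph k n ∧ specRad G > (n : ℝ) - k - 2 := by
  by_cases hsmall : n ≤ 2 * k + 2
  · exact ⟨_, inferInstance,
      le_minDegree_Ngraph_deleteEdges hn1 _ _ le_rfl (by omega) (by omega),
      deleteEdges_lt_of_adj (Ngraph_adj_mk_of_le _ _ (by omega) le_rfl (by omega)),
      lt_specRad_Ngraph_deleteEdges_of_le hk hn1 hsmall⟩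
  · exact ⟨_, inferInstance,
      le_minDegree_Ngraph_deleteEdges hn1 _ _ (by omega) (by omega) (by omega),
      deleteEdges_lt_of_adj (Ngraph_adj_mk_of_le _ _ (by omega) (by omega) (by omega)),
      lt_specRad_Ngraph_deleteEdges_of_ge (by omega) hn2⟩
end

section
/- If G = cl_n(G) is an n-closed graph of order n (i.e., every pair of distinct nonadjacent vertices u, v satisfies d(u) + d(v) ≤ n - 1), G has no Hamiltonian cycle, minimum degree δ(G) = k ≥ 1, n ≥ k³/2 + k + 4, and the number of edges m satisfies 2m ≥ n² - 2kn + 2k² + k - n, then G contains exactly k vertices of degree k and the remaining n - k vertices induce a complete graph. -/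
open SimpleGraph Finset

/-
Take a nonadjacent pair `u, v` with `d(u) + d(v)` maximal and `d(u) ≤ d(v)`, and let `P` be the
set of non-neighbours of `v`. Every vertex of `P` has degree at most `d(u)`, and `n`-closedness
gives `2 d(u) < n` and `d(u) ≤ |P|`. For any vertex set `S`, at most `∑_{w ∈ S} d(w)` edges
meet `S`, while the edges and non-edges outside `S` number `C(n - |S|, 2)` together, so
`m + (non-edges outside S) ≤ ∑_{w ∈ S} d(w) + C(n - |S|, 2)`.
Played against the lower bound on `m`, this forces first `d(u) = k` (take `S = P ∪ {z}` with
`d(z) = k`), then `|P| = k` (take `S = P`), and finally, with `S = P`, that every vertex outside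
`P` has at most `k² / 2 + k` non-neighbours, so its degree is at least `n / 2`. By
`n`-closedness two such vertices are adjacent.
-/

lemma Nat.cast_two_mul_choose_two (c : ℕ) : (2 * c.choose 2 : ℤ) = c * (c - 1) := by
  have h : ((2 * c.choose 2 : ℤ) : ℚ) = ((c * (c - 1) : ℤ) : ℚ) := by
    push_cast [Nat.cast_choose_two]; ring
  exact_mod_cast h

lemma edge_bound_lt_of_lt {k h n : ℤ} (hk : 1 ≤ k) (hkh : k < h) (hhn : 2 * h < n)
    (hn : k ^ 3 + 2 * k + 8 ≤ 2 * n) :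
    2 * ((h - 1) * h + k) + (n - h) * (n - h - 1) < (n - k) * (n - k - 1) + k ^ 2 := by
  -- Integrality matters here: for `k = 2`, `n = 10` the bound fails at the real point `h = 9 / 2`.
  obtain ⟨d, rfl⟩ : ∃ d, h = k + 1 + d := ⟨h - k - 1, by ring⟩
  obtain ⟨x, rfl⟩ : ∃ x, n = 2 * (k + 1 + d) + 1 + x := ⟨n - 2 * (k + 1 + d) - 1, by ring⟩
  have hd : 0 ≤ d := by linarith
  have hx : 0 ≤ x := by linarith
  have hdd : 0 ≤ (d - 1) * (d - 2) := by rcases le_or_gt d 1 with h | h <;> nlinarith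
  have hkk : 0 ≤ (k - 1) * (k - 2) := by rcases le_or_gt k 1 with h | h <;> nlinarith
  have hC : 0 ≤ 2 * x + 4 * d - (k ^ 3 - 2 * k + 2) := by linarith
  nlinarith [mul_nonneg hd hx, mul_nonneg hd hC, mul_nonneg hx hC, sq_nonneg (d - k),
    mul_nonneg hkk (by linarith : (0 : ℤ) ≤ k)]

-- The left side bounds `2m` when `|S| = σ` and all degrees in `S` are at most `h` except one at
-- most `k`; the right side is the assumed lower bound on `2m`.
lemma edge_bound_lt {k h σ n : ℤ} (hk : 1 ≤ k) (hkh : k ≤ h) (hhσ : h ≤ σ) (hkσ : k < σ)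
    (hσn : σ + h ≤ n) (hhn : 2 * h < n) (hn : k ^ 3 + 2 * k + 8 ≤ 2 * n) :
    2 * ((σ - 1) * h + k) + (n - σ) * (n - σ - 1) < (n - k) * (n - k - 1) + k ^ 2 := by
  rcases hkh.lt_or_eq with hkh | rfl
  · calc 2 * ((σ - 1) * h + k) + (n - σ) * (n - σ - 1)
          ≤ 2 * ((h - 1) * h + k) + (n - h) * (n - h - 1) := by
            nlinarith [mul_nonneg (sub_nonneg.mpr hhσ)
              (by linarith : (0 : ℤ) ≤ 2 * n - σ - 3 * h - 1)]
      _ < _ := edge_bound_lt_of_lt hk hkh hhn hn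
  · have hkk : 0 ≤ (k - 1) * (k - 2) * k := by
      rcases hk.eq_or_lt with rfl | hk
      · norm_num
      · exact mul_nonneg (mul_nonneg (by linarith) (by linarith)) (by linarith)
    have hkn : 2 * k + 2 ≤ n := by nlinarith [sq_nonneg (k - 1)]
    nlinarith [mul_nonneg (by linarith : (0 : ℤ) ≤ σ - k - 1)
      (by linarith : (0 : ℤ) ≤ 2 * n - σ - 3 * k - 2)]

lemma sq_add_two_mul_add_two_le {k n : ℤ} (hk : 1 ≤ k) (hn : k ^ 3 + 2 * k + 8 ≤ 2 * n) :
    k ^ 2 + 2 * k + 2 ≤ n := by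
  rcases le_or_gt k 2 with hk2 | hk2
  · interval_cases k <;> linarith
  · nlinarith [mul_nonneg (by linarith : (0 : ℤ) ≤ k - 3) (sq_nonneg k)]

namespace SimpleGraph

variable {V : Type*} [Fintype V] [DecidableEq V] (G : SimpleGraph V) [DecidableRel G.Adj]

lemma filter_mem_sym2_subset_image_offDiag (T : Finset V) :
    {e ∈ G.edgeFinset | e ∈ T.sym2} ⊆ T.offDiag.image Sym2.mk.uncurry := by
  intro e he
  induction e using Sym2.ind with
  | h a b =>
    simp only [mem_filter, mem_edgeFinset, mem_edgeSet, mem_sym2_iff, Sym2.mem_iff,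
      forall_eq_or_imp, forall_eq] at he
    exact mem_image.mpr ⟨(a, b), mem_offDiag.mpr ⟨he.2.1, he.2.2, he.1.ne⟩, rfl⟩

lemma card_edges_add_card_compl_edges_le (T : Finset V) :
    #{e ∈ G.edgeFinset | e ∈ T.sym2} + #{e ∈ Gᶜ.edgeFinset | e ∈ T.sym2} ≤
      (#T).choose 2 := by
  rw [← Sym2.card_image_offDiag, ← card_union_of_disjoint]
  · exact card_le_card (union_subset (G.filter_mem_sym2_subset_image_offDiag T)
      (Gᶜ.filter_mem_sym2_subset_image_offDiag T))
  · exact disjoint_filter_filter (disjoint_edgeFinset.mpr disjoint_compl_right)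

lemma card_edgeFinset_le_sum_degree_add (S : Finset V) :
    #G.edgeFinset ≤ ∑ v ∈ S, G.degree v + #{e ∈ G.edgeFinset | e ∈ Sᶜ.sym2} := by
  have hsub : G.edgeFinset ⊆
      S.biUnion (fun v => G.incidenceFinset v) ∪ {e ∈ G.edgeFinset | e ∈ Sᶜ.sym2} := by
    intro e he
    by_cases h : ∃ v ∈ S, v ∈ e
    · obtain ⟨v, hv, hve⟩ := h
      exact mem_union_left _ (mem_biUnion.mpr
        ⟨v, hv, (G.mem_incidenceFinset v e).mpr ⟨mem_edgeFinset.mp he, hve⟩⟩)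
    · push Not at h
      exact mem_union_right _
        (mem_filter.mpr ⟨he, mem_sym2_iff.mpr fun v hv => mem_compl.mpr fun hS => h v hS hv⟩)
  calc #G.edgeFinset
      ≤ #(S.biUnion fun v => G.incidenceFinset v) + #{e ∈ G.edgeFinset | e ∈ Sᶜ.sym2} :=
        (card_le_card hsub).trans (card_union_le _ _)
    _ ≤ _ := by
        gcongr
        exact card_biUnion_le.trans
          (sum_le_sum fun v _ => (G.card_incidenceFinset_eq_degree v).le)

lemma card_edgeFinset_add_card_compl_edges_le (S : Finset V) :
    #G.edgeFinset + #{e ∈ Gᶜ.edgeFinset | e ∈ Sᶜ.sym2} ≤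
      ∑ v ∈ S, G.degree v + (#Sᶜ).choose 2 := by
  have := G.card_edgeFinset_le_sum_degree_add S
  have := G.card_edges_add_card_compl_edges_le Sᶜ
  omega

lemma sum_degree_add_le {S : Finset V} {z : V} {k h : ℕ} (hz : z ∈ S) (hzk : G.degree z ≤ k)
    (hS : ∀ w ∈ S, G.degree w ≤ h) : ∑ v ∈ S, G.degree v + h ≤ #S * h + k := by
  have hrest : ∑ v ∈ S.erase z, G.degree v ≤ #(S.erase z) * h := by
    simpa using sum_le_card_nsmul _ _ _ fun w hw => hS w (mem_of_mem_erase hw)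
  rw [← sum_erase_add S _ hz, ← card_erase_add_one hz]
  linarith

lemma two_mul_card_edgeFinset_lt_of_degree_le {S : Finset V} {z : V} {k h : ℕ} (hk : 1 ≤ k)
    (hn : (k : ℤ) ^ 3 + 2 * k + 8 ≤ 2 * Fintype.card V) (hz : z ∈ S) (hzk : G.degree z ≤ k)
    (hS : ∀ w ∈ S, G.degree w ≤ h) (hkh : k ≤ h) (hhS : h ≤ #S) (hkS : k < #S)
    (hSn : #S + h ≤ Fintype.card V) (hhn : 2 * h < Fintype.card V) :
    2 * (#G.edgeFinset : ℤ) <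
      (Fintype.card V - k) * (Fintype.card V - k - 1) + k ^ 2 := by
  have hsum := G.sum_degree_add_le hz hzk hS
  have hcount := G.card_edgeFinset_add_card_compl_edges_le S
  have hc := S.card_compl_add_card
  have hchoose := Nat.cast_two_mul_choose_two #Sᶜ
  have hbound := edge_bound_lt (k := k) (h := h) (σ := #S) (n := Fintype.card V)
    (by exact_mod_cast hk) (by exact_mod_cast hkh) (by exact_mod_cast hhS)
    (by exact_mod_cast hkS) (by exact_mod_cast hSn) (by exact_mod_cast hhn) hn
  have hc' : (#Sᶜ : ℤ) = Fintype.card V - #S := by omega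
  rw [hc'] at hchoose
  have hsum' : (∑ v ∈ S, G.degree v : ℤ) + h ≤ #S * h + k := by exact_mod_cast hsum
  have hcount' : (#G.edgeFinset : ℤ) ≤ ∑ v ∈ S, G.degree v + (#Sᶜ).choose 2 := by
    exact_mod_cast (Nat.le_add_right _ _).trans hcount
  nlinarith

lemma two_mul_degree_compl_le {S : Finset V} {x : V} {k : ℕ} (hS : #S = k)
    (hSdeg : ∀ w ∈ S, G.degree w ≤ k) (hx : x ∉ S)
    (hm : ((Fintype.card V : ℤ) - k) * (Fintype.card V - k - 1) + k ^ 2 ≤ 2 * #G.edgeFinset) :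
    2 * Gᶜ.degree x ≤ k ^ 2 + 2 * k := by
  set N := {y ∈ Sᶜ | Gᶜ.Adj x y}
  have hN : #N ≤ #{e ∈ Gᶜ.edgeFinset | e ∈ Sᶜ.sym2} := by
    refine card_le_card_of_injOn (fun y => s(x, y)) (fun y hy => ?_) (fun y _ y' _ h => ?_)
    · simp only [N, coe_filter, Set.mem_ofPred_eq] at hy
      simpa [mem_sym2_iff, hy.2, hx] using hy.1
    · exact Sym2.congr_right.mp h
  have hdeg : Gᶜ.degree x ≤ #N + k := by
    rw [← card_neighborFinset_eq_degree, ← hS]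
    refine (card_le_card fun y hy => ?_).trans (card_union_le N S)
    by_cases hyS : y ∈ S
    · exact mem_union_right _ hyS
    · exact mem_union_left _
        (mem_filter.mpr ⟨mem_compl.mpr hyS, (mem_neighborFinset _ _ _).mp hy⟩)
  have hsum : ∑ v ∈ S, G.degree v ≤ k * k := by
    simpa [hS] using sum_le_card_nsmul S _ _ hSdeg
  have hcount := G.card_edgeFinset_add_card_compl_edges_le S
  have hc := S.card_compl_add_card
  have hchoose := Nat.cast_two_mul_choose_two #Sᶜ
  have hc' : (#Sᶜ : ℤ) = Fintype.card V - k := by omega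
  rw [hc'] at hchoose
  have hcount' : (#G.edgeFinset : ℤ) + #N ≤ k * k + (#Sᶜ).choose 2 := by
    exact_mod_cast (by omega : #G.edgeFinset + #N ≤ k * k + (#Sᶜ).choose 2)
  have hN2 : 2 * #N ≤ k ^ 2 := by
    suffices 2 * (#N : ℤ) ≤ k ^ 2 by exact_mod_cast this
    nlinarith
  omega

lemma card_neighborFinset_compl_add_degree (v : V) :
    #(Gᶜ.neighborFinset v) + G.degree v + 1 = Fintype.card V := by
  have := G.degree_lt_card_verts v
  rw [card_neighborFinset_eq_degree, degree_compl]
  omega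

def IsNClosed : Prop :=
  ∀ u v, Gᶜ.Adj u v → G.degree u + G.degree v < Fintype.card V

structure IsMaxNonadjPair (u v : V) : Prop where
  compl_adj : Gᶜ.Adj u v
  degree_le_degree : G.degree u ≤ G.degree v
  degree_add_le : ∀ x y, Gᶜ.Adj x y → G.degree x + G.degree y ≤ G.degree u + G.degree v

lemma exists_isMaxNonadjPair (h : ∃ x y, Gᶜ.Adj x y) : ∃ u v, G.IsMaxNonadjPair u v := by
  obtain ⟨x, y, hxy⟩ := h
  obtain ⟨⟨u, v⟩, huv, hmax⟩ := exists_max_image {p : V × V | Gᶜ.Adj p.1 p.2}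
    (fun p => G.degree p.1 + G.degree p.2) ⟨(x, y), by simpa using hxy⟩
  replace huv : Gᶜ.Adj u v := by simpa using huv
  replace hmax : ∀ x y, Gᶜ.Adj x y → G.degree x + G.degree y ≤ G.degree u + G.degree v :=
    fun x y hxy => hmax (x, y) (by simpa using hxy)
  rcases le_total (G.degree u) (G.degree v) with h | h
  · exact ⟨u, v, huv, h, hmax⟩
  · exact ⟨v, u, huv.symm, h, fun x y hxy => (hmax x y hxy).trans_eq (add_comm _ _)⟩

namespace IsMaxNonadjPair

variable {G} {u v : V} {k : ℕ}

lemma degree_le_of_mem (p : G.IsMaxNonadjPair u v) {w : V} (hw : w ∈ Gᶜ.neighborFinset v) :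
    G.degree w ≤ G.degree u := by
  have := p.degree_add_le w v ((mem_neighborFinset _ _ _).mp hw).symm
  omega

lemma degree_eq (p : G.IsMaxNonadjPair u v) (hk : 1 ≤ k)
    (hn : (k : ℤ) ^ 3 + 2 * k + 8 ≤ 2 * Fintype.card V) (hδ : G.minDegree = k)
    (huv : G.degree u + G.degree v < Fintype.card V)
    (hm : ((Fintype.card V : ℤ) - k) * (Fintype.card V - k - 1) + k ^ 2 ≤ 2 * #G.edgeFinset) :
    G.degree u = k := by
  have : Nonempty V := ⟨u⟩
  refine le_antisymm ?_ (hδ ▸ G.minDegree_le_degree u)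
  by_contra! hku
  obtain ⟨z, hz⟩ := G.exists_minimal_degree_vertex
  have hP := G.card_neighborFinset_compl_add_degree v
  have := p.degree_le_degree
  have hS := card_insert_le z (Gᶜ.neighborFinset v)
  have hPS := card_le_card (subset_insert z (Gᶜ.neighborFinset v))
  refine (G.two_mul_card_edgeFinset_lt_of_degree_le hk hn
    (mem_insert_self z (Gᶜ.neighborFinset v)) (hz ▸ hδ.le) (fun w hw => ?_) hku.le
    (by omega) (by omega) (by omega) (by omega)).not_ge hm
  rcases mem_insert.mp hw with rfl | hw
  · omega
  · exact p.degree_le_of_mem hw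

lemma card_eq (p : G.IsMaxNonadjPair u v) (hk : 1 ≤ k)
    (hn : (k : ℤ) ^ 3 + 2 * k + 8 ≤ 2 * Fintype.card V) (hu : G.degree u = k)
    (huv : G.degree u + G.degree v < Fintype.card V)
    (hm : ((Fintype.card V : ℤ) - k) * (Fintype.card V - k - 1) + k ^ 2 ≤ 2 * #G.edgeFinset) :
    #(Gᶜ.neighborFinset v) = k := by
  have hP := G.card_neighborFinset_compl_add_degree v
  have := p.degree_le_degree
  refine le_antisymm ?_ (by omega)
  by_contra! hkP
  refine (G.two_mul_card_edgeFinset_lt_of_degree_le hk hn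
    ((mem_neighborFinset _ _ _).mpr p.compl_adj.symm) hu.le
    (fun w hw => hu ▸ p.degree_le_of_mem hw) le_rfl
    (by omega) hkP (by omega) (by omega)).not_ge hm

end IsMaxNonadjPair

theorem exists_card_eq_and_card_le_two_mul_degree_of_isNClosed {k : ℕ} (hk : 1 ≤ k)
    (hn : (k : ℤ) ^ 3 + 2 * k + 8 ≤ 2 * Fintype.card V)
    (hclosed : G.IsNClosed)
    (hδ : G.minDegree = k)
    (hm : ((Fintype.card V : ℤ) - k) * (Fintype.card V - k - 1) + k ^ 2 ≤ 2 * #G.edgeFinset) :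
    ∃ P : Finset V, #P = k ∧ (∀ w ∈ P, G.degree w = k) ∧
      ∀ x ∉ P, Fintype.card V ≤ 2 * G.degree x := by
  have hkn : k ^ 2 + 2 * k + 2 ≤ Fintype.card V := by
    exact_mod_cast sq_add_two_mul_add_two_le (by exact_mod_cast hk) hn
  have : Nonempty V := Fintype.card_pos_iff.mp (by omega)
  obtain ⟨z, hz⟩ := G.exists_minimal_degree_vertex
  have hz' : 0 < Gᶜ.degree z := by
    have := G.card_neighborFinset_compl_add_degree z
    rw [card_neighborFinset_eq_degree] at this
    omega
  obtain ⟨w, hzw⟩ := (Gᶜ.degree_pos_iff_exists_adj z).mp hz'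
  obtain ⟨u, v, p⟩ := G.exists_isMaxNonadjPair ⟨z, w, hzw⟩
  have huv := hclosed u v p.compl_adj
  have hu := p.degree_eq hk hn hδ huv hm
  refine ⟨Gᶜ.neighborFinset v, p.card_eq hk hn hu huv hm,
    fun w hw => le_antisymm (hu ▸ p.degree_le_of_mem hw) (hδ ▸ G.minDegree_le_degree w),
    fun x hx => ?_⟩
  have := G.two_mul_degree_compl_le (p.card_eq hk hn hu huv hm)
    (fun w hw => hu ▸ p.degree_le_of_mem hw) hx hm
  have := G.card_neighborFinset_compl_add_degree x
  rw [card_neighborFinset_eq_degree] at this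
  omega

theorem card_filter_degree_eq_and_adj_of_isNClosed {k : ℕ} (hk : 1 ≤ k)
    (hn : (k : ℤ) ^ 3 + 2 * k + 8 ≤ 2 * Fintype.card V)
    (hclosed : G.IsNClosed)
    (hδ : G.minDegree = k)
    (hm : ((Fintype.card V : ℤ) - k) * (Fintype.card V - k - 1) + k ^ 2 ≤ 2 * #G.edgeFinset) :
    #{v | G.degree v = k} = k ∧
      ∀ u v, u ≠ v → G.degree u ≠ k → G.degree v ≠ k → G.Adj u v := by
  obtain ⟨P, hPk, hPdeg, hbig⟩ :=
    G.exists_card_eq_and_card_le_two_mul_degree_of_isNClosed hk hn hclosed hδ hm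
  have hkn : k ^ 2 + 2 * k + 2 ≤ Fintype.card V := by
    exact_mod_cast sq_add_two_mul_add_two_le (by exact_mod_cast hk) hn
  refine ⟨?_, fun u v huv hu hv => ?_⟩
  · convert hPk
    ext w
    simp only [mem_filter, mem_univ, true_and]
    refine ⟨fun hw => ?_, hPdeg w⟩
    by_contra hwP
    have := hbig w hwP
    omega
  · by_contra hadj
    have := hclosed u v ((compl_adj G u v).mpr ⟨huv, hadj⟩)
    have := hbig u fun h => hu (hPdeg u h)
    have := hbig v fun h => hv (hPdeg v h)
    omega

end SimpleGraph

theorem stmt_17_general (k n : ℕ) (hk : 1 ≤ k) (hn : (n : ℝ) ≥ (k : ℝ) ^ 3 / 2 + k + 4)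
    (G : SimpleGraph (Fin n)) [DecidableRel G.Adj]
    (hclosed : ∀ u v : Fin n, u ≠ v → ¬ G.Adj u v → G.degree u + G.degree v ≤ n - 1)
    (hδ : G.minDegree = k)
    (hm : 2 * (G.edgeFinset.card : ℝ) ≥
      (n : ℝ) ^ 2 - 2 * k * n + 2 * (k : ℝ) ^ 2 + k - n) :
    (Finset.univ.filter fun v : Fin n => G.degree v = k).card = k ∧
      ∀ u v : Fin n, u ≠ v → G.degree u ≠ k → G.degree v ≠ k → G.Adj u v := by
  have hn' : (k : ℤ) ^ 3 + 2 * k + 8 ≤ 2 * Fintype.card (Fin n) := by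
    rw [Fintype.card_fin]
    exact_mod_cast (by linarith : (k : ℝ) ^ 3 + 2 * k + 8 ≤ 2 * n)
  have hm' : ((Fintype.card (Fin n) : ℤ) - k) * (Fintype.card (Fin n) - k - 1) + k ^ 2
      ≤ 2 * #G.edgeFinset := by
    rw [Fintype.card_fin]
    exact_mod_cast (by linarith : ((n : ℝ) - k) * (n - k - 1) + k ^ 2 ≤ 2 * #G.edgeFinset)
  have hclosed' : G.IsNClosed := by
    intro u v huv
    have := hclosed u v huv.ne ((compl_adj G u v).mp huv).2
    have := u.pos
    rw [Fintype.card_fin]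
    omega
  exact G.card_filter_degree_eq_and_adj_of_isNClosed hk hn' hclosed' hδ hm'

/-- If `G` is `n`-closed, has no Hamiltonian cycle, minimum degree `k ≥ 1`,
`n ≥ k³/2 + k + 4`, and `2m ≥ n² - 2kn + 2k² + k - n`, then `G` has exactly `k`
vertices of degree `k` and the remaining `n - k` vertices induce a complete
graph. -/
theorem stmt_17 (k n : ℕ) (hk : 1 ≤ k) (hn : (n : ℝ) ≥ (k : ℝ) ^ 3 / 2 + k + 4)
    (G : SimpleGraph (Fin n)) [DecidableRel G.Adj]
    (hclosed : ∀ u v : Fin n, u ≠ v → ¬ G.Adj u v → G.degree u + G.degree v ≤ n - 1)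
    (hham : ¬ G.IsHamiltonian) (hδ : G.minDegree = k)
    (hm : 2 * (G.edgeFinset.card : ℝ) ≥
      (n : ℝ) ^ 2 - 2 * k * n + 2 * (k : ℝ) ^ 2 + k - n) :
    (Finset.univ.filter fun v : Fin n => G.degree v = k).card = k ∧
      ∀ u v : Fin n, u ≠ v → G.degree u ≠ k → G.degree v ≠ k → G.Adj u v :=
  stmt_17_general k n hk hn G hclosed hδ hm
end
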